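/- arXiv:1810.01161 — 5 statements merged into one kernel-verified Lean document; each statement's English description precedes it below -/
import Mathlib

section
/- For every integer k ≥ 3, setting n = 2(k−1)², there exist intersecting families F₁, …, F_{n−2k+2} of k-element subsets of [n] whose union is the collection of ALL k-element subsets of [n], and such that no F_i is contained in a star (i.e., for every i there is no single element of [n] contained in all members of F_i). In particular, KG_{n,k} admits a proper coloring into χ(KG_{n,k}) = n − 2k + 2 colors in which no color class is contained in a star. -/
namespace CWStar

/-! Ground set encoding: `Nd q = (q+2)*(2*q+4)` elements, `q+2` blocks of size `2q+4`.
Here `q = k - 3`. Condition indices: `Md q = (q+2)*(2*q+2)`. -/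

def Nd (q : ℕ) : ℕ := (q+2)*(2*q+4)
def Md (q : ℕ) : ℕ := (q+2)*(2*q+2)

lemma Nd_pos (q : ℕ) : 0 < Nd q := Nat.mul_pos (by omega) (by omega)
lemma Md_pos (q : ℕ) : 0 < Md q := Nat.mul_pos (by omega) (by omega)

lemma enc_lt {s S r R : ℕ} (hs : s < S) (hr : r < R) : s*R + r < S*R := by
  have h1 : (s+1)*R ≤ S*R := Nat.mul_le_mul_right _ (by omega)
  have h2 : (s+1)*R = s*R + R := by ring
  omega

def blk (q : ℕ) (e : Fin (Nd q)) : ℕ := e.1 / (2*q+4)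
def off (q : ℕ) (e : Fin (Nd q)) : ℕ := e.1 % (2*q+4)

lemma off_lt (q : ℕ) (e : Fin (Nd q)) : off q e < 2*q+4 := Nat.mod_lt _ (by omega)
lemma blk_lt (q : ℕ) (e : Fin (Nd q)) : blk q e < q+2 := by
  have h := e.2
  unfold Nd at h
  exact (Nat.div_lt_iff_lt_mul (by omega)).mpr h

lemma val_decomp (q : ℕ) (e : Fin (Nd q)) : e.1 = blk q e * (2*q+4) + off q e := by
  have h := Nat.div_add_mod' e.1 (2*q+4)
  unfold blk off
  omega

lemma ext_blk_off {q : ℕ} {e e' : Fin (Nd q)} (h1 : blk q e = blk q e')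
    (h2 : off q e = off q e') : e = e' := by
  apply Fin.ext
  rw [val_decomp q e, val_decomp q e', h1, h2]

def mk (q : ℕ) (s r : ℕ) : Fin (Nd q) := ⟨(s*(2*q+4)+r) % Nd q, Nat.mod_lt _ (Nd_pos q)⟩

lemma mk_val {q s r : ℕ} (hs : s < q+2) (hr : r < 2*q+4) : (mk q s r).1 = s*(2*q+4)+r := by
  have h : s*(2*q+4)+r < Nd q := enc_lt hs hr
  exact Nat.mod_eq_of_lt h

lemma blk_mk {q s r : ℕ} (hs : s < q+2) (hr : r < 2*q+4) : blk q (mk q s r) = s := by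
  unfold blk
  rw [mk_val hs hr, Nat.add_comm, Nat.add_mul_div_right _ _ (by omega : 0 < 2*q+4),
    Nat.div_eq_of_lt hr, Nat.zero_add]

lemma off_mk {q s r : ℕ} (hs : s < q+2) (hr : r < 2*q+4) : off q (mk q s r) = r := by
  unfold off
  rw [mk_val hs hr, Nat.add_comm, Nat.add_mul_mod_self_right, Nat.mod_eq_of_lt hr]

/-! Condition index decoding -/

def cs (q : ℕ) (i : Fin (Md q)) : ℕ := i.1 / (2*q+2)
def cj (q : ℕ) (i : Fin (Md q)) : ℕ := i.1 % (2*q+2)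

lemma cj_lt (q : ℕ) (i : Fin (Md q)) : cj q i < 2*q+2 := Nat.mod_lt _ (by omega)
lemma cs_lt (q : ℕ) (i : Fin (Md q)) : cs q i < q+2 := by
  have h := i.2
  unfold Md at h
  exact (Nat.div_lt_iff_lt_mul (by omega)).mpr h

lemma ival_decomp (q : ℕ) (i : Fin (Md q)) : i.1 = cs q i * (2*q+2) + cj q i := by
  have h := Nat.div_add_mod' i.1 (2*q+2)
  unfold cs cj
  omega

lemma eqI {q : ℕ} {i i' : Fin (Md q)} (h1 : cs q i = cs q i') (h2 : cj q i = cj q i') :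
    i = i' := by
  apply Fin.ext
  rw [ival_decomp q i, ival_decomp q i', h1, h2]

def mkI (q : ℕ) (s j : ℕ) : Fin (Md q) := ⟨(s*(2*q+2)+j) % Md q, Nat.mod_lt _ (Md_pos q)⟩

lemma mkI_val {q s j : ℕ} (hs : s < q+2) (hj : j < 2*q+2) : (mkI q s j).1 = s*(2*q+2)+j :=
  Nat.mod_eq_of_lt (enc_lt hs hj)

lemma cs_mkI {q s j : ℕ} (hs : s < q+2) (hj : j < 2*q+2) : cs q (mkI q s j) = s := by
  unfold cs
  rw [mkI_val hs hj, Nat.add_comm, Nat.add_mul_div_right _ _ (by omega : 0 < 2*q+2),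
    Nat.div_eq_of_lt hj, Nat.zero_add]

lemma cj_mkI {q s j : ℕ} (hs : s < q+2) (hj : j < 2*q+2) : cj q (mkI q s j) = j := by
  unfold cj
  rw [mkI_val hs hj, Nat.add_comm, Nat.add_mul_mod_self_right, Nat.mod_eq_of_lt hj]


/-! Special elements and the families -/

def aElt (q : ℕ) (i : Fin (Md q)) : Fin (Nd q) := mk q (cs q i) (2*q+2)
def bElt (q : ℕ) (i : Fin (Md q)) : Fin (Nd q) := mk q (cs q i) (2*q+3)
def xElt (q : ℕ) (i : Fin (Md q)) : Fin (Nd q) := mk q (cs q i) (2*q+1)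
def zElt (q : ℕ) (i : Fin (Md q)) (δ : ℕ) : Fin (Nd q) :=
  mk q (cs q i) ((cj q i + δ) % (2*q+1))

/-- center of condition `i` -/
def xi (q : ℕ) (i : Fin (Md q)) : Fin (Nd q) := mk q (cs q i) (cj q i)

lemma blk_aElt (q : ℕ) (i : Fin (Md q)) : blk q (aElt q i) = cs q i :=
  blk_mk (cs_lt q i) (by omega)
lemma off_aElt (q : ℕ) (i : Fin (Md q)) : off q (aElt q i) = 2*q+2 :=
  off_mk (cs_lt q i) (by omega)
lemma blk_bElt (q : ℕ) (i : Fin (Md q)) : blk q (bElt q i) = cs q i :=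
  blk_mk (cs_lt q i) (by omega)
lemma off_bElt (q : ℕ) (i : Fin (Md q)) : off q (bElt q i) = 2*q+3 :=
  off_mk (cs_lt q i) (by omega)
lemma blk_xElt (q : ℕ) (i : Fin (Md q)) : blk q (xElt q i) = cs q i :=
  blk_mk (cs_lt q i) (by omega)
lemma off_xElt (q : ℕ) (i : Fin (Md q)) : off q (xElt q i) = 2*q+1 :=
  off_mk (cs_lt q i) (by omega)
lemma zmod_lt (q c δ : ℕ) : (c + δ) % (2*q+1) < 2*q+1 := Nat.mod_lt _ (by omega)
lemma blk_zElt (q : ℕ) (i : Fin (Md q)) (δ : ℕ) : blk q (zElt q i δ) = cs q i :=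
  blk_mk (cs_lt q i) (by have := zmod_lt q (cj q i) δ; omega)
lemma off_zElt (q : ℕ) (i : Fin (Md q)) (δ : ℕ) :
    off q (zElt q i δ) = (cj q i + δ) % (2*q+1) :=
  off_mk (cs_lt q i) (by have := zmod_lt q (cj q i) δ; omega)
lemma blk_xi (q : ℕ) (i : Fin (Md q)) : blk q (xi q i) = cs q i :=
  blk_mk (cs_lt q i) (by have := cj_lt q i; omega)
lemma off_xi (q : ℕ) (i : Fin (Md q)) : off q (xi q i) = cj q i :=
  off_mk (cs_lt q i) (by have := cj_lt q i; omega)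

lemma xi_inj {q : ℕ} {i i' : Fin (Md q)} (h : xi q i = xi q i') : i = i' := by
  apply eqI
  · rw [← blk_xi q i, ← blk_xi q i', h]
  · rw [← off_xi q i, ← off_xi q i', h]

/-- the auxiliary set `W i` -/
def W (q : ℕ) (i : Fin (Md q)) : Finset (Fin (Nd q)) :=
  if cj q i = 2*q+1 then {aElt q i, bElt q i}
  else ((Finset.Icc 1 q).image (zElt q i)) ∪ {xElt q i, aElt q i, bElt q i}

lemma aElt_mem_W (q : ℕ) (i : Fin (Md q)) : aElt q i ∈ W q i := by
  unfold W; split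
  · exact Finset.mem_insert_self _ _
  · exact Finset.mem_union_right _ (by simp)

lemma bElt_mem_W (q : ℕ) (i : Fin (Md q)) : bElt q i ∈ W q i := by
  unfold W; split
  · exact Finset.mem_insert_of_mem (Finset.mem_singleton_self _)
  · exact Finset.mem_union_right _ (by simp)

lemma xElt_mem_W {q : ℕ} {i : Fin (Md q)} (h : cj q i ≠ 2*q+1) : xElt q i ∈ W q i := by
  unfold W; rw [if_neg h]
  exact Finset.mem_union_right _ (by simp)

lemma zElt_mem_W {q : ℕ} {i : Fin (Md q)} (h : cj q i ≠ 2*q+1) {δ : ℕ}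
    (hδ : δ ∈ Finset.Icc 1 q) : zElt q i δ ∈ W q i := by
  unfold W; rw [if_neg h]
  exact Finset.mem_union_left _ (Finset.mem_image_of_mem _ hδ)

lemma W_mem_blk {q : ℕ} {i : Fin (Md q)} {e : Fin (Nd q)} (h : e ∈ W q i) :
    blk q e = cs q i := by
  unfold W at h
  split at h
  · rcases Finset.mem_insert.mp h with h | h
    · rw [h, blk_aElt]
    · rw [Finset.mem_singleton.mp h, blk_bElt]
  · rcases Finset.mem_union.mp h with h | h
    · obtain ⟨δ, _, rfl⟩ := Finset.mem_image.mp h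
      rw [blk_zElt]
    · simp only [Finset.mem_insert, Finset.mem_singleton] at h
      rcases h with h | h | h
      · rw [h, blk_xElt]
      · rw [h, blk_aElt]
      · rw [h, blk_bElt]

/-- key helper: value of `x % m` when `x < 2m` -/
lemma mod2 {x m : ℕ} (h0 : 0 < m) (h : x < 2*m) : x % m = x ∨ x % m + m = x := by
  rcases Nat.lt_or_ge x m with h1 | h1
  · left; exact Nat.mod_eq_of_lt h1
  · right
    rw [Nat.mod_eq_sub_mod h1, Nat.mod_eq_of_lt (by omega)]
    omega

lemma W_off_ne_center {q : ℕ} {i : Fin (Md q)} {e : Fin (Nd q)} (h : e ∈ W q i) :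
    off q e ≠ cj q i := by
  have hcj := cj_lt q i
  unfold W at h
  split at h
  case isTrue hstar =>
    rcases Finset.mem_insert.mp h with h | h
    · rw [h, off_aElt]; omega
    · rw [Finset.mem_singleton.mp h, off_bElt]; omega
  case isFalse hstar =>
    rcases Finset.mem_union.mp h with h | h
    · obtain ⟨δ, hδ, rfl⟩ := Finset.mem_image.mp h
      rw [off_zElt]
      have hδ' := Finset.mem_Icc.mp hδ
      have := mod2 (show 0 < 2*q+1 by omega)
        (show cj q i + δ < 2*(2*q+1) by omega)
      omega
    · simp only [Finset.mem_insert, Finset.mem_singleton] at h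
      rcases h with h | h | h
      · rw [h, off_xElt]; omega
      · rw [h, off_aElt]; omega
      · rw [h, off_bElt]; omega


lemma off_W_lt {q : ℕ} {i : Fin (Md q)} {e : Fin (Nd q)} (h : e ∈ W q i) :
    off q e < 2*q+4 := off_lt q e

/-- cardinality of `W i` for star conditions -/
lemma W_card {q : ℕ} {i : Fin (Md q)} (h : cj q i ≠ 2*q+1) : (W q i).card = q+3 := by
  unfold W
  rw [if_neg h]
  have hzoff : ∀ δ : ℕ, off q (zElt q i δ) < 2*q+1 := by
    intro δ; rw [off_zElt]; exact zmod_lt q _ δ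
  have hinj : Set.InjOn (zElt q i) (Finset.Icc 1 q) := by
    intro δ hδ δ' hδ' heq
    simp only [Finset.coe_Icc, Set.mem_Icc] at hδ hδ'
    have h1 : off q (zElt q i δ) = off q (zElt q i δ') := by rw [heq]
    rw [off_zElt, off_zElt] at h1
    have hcj := cj_lt q i
    have e1 := mod2 (show 0 < 2*q+1 by omega) (show cj q i + δ < 2*(2*q+1) by omega)
    have e2 := mod2 (show 0 < 2*q+1 by omega) (show cj q i + δ' < 2*(2*q+1) by omega)
    omega
  have hdisj : Disjoint ((Finset.Icc 1 q).image (zElt q i))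
      ({xElt q i, aElt q i, bElt q i} : Finset (Fin (Nd q))) := by
    rw [Finset.disjoint_left]
    intro e he he'
    obtain ⟨δ, _, rfl⟩ := Finset.mem_image.mp he
    have h1 := hzoff δ
    simp only [Finset.mem_insert, Finset.mem_singleton] at he'
    rcases he' with h2 | h2 | h2 <;> rw [h2] at h1 <;>
      first
      | (rw [off_xElt] at h1; omega)
      | (rw [off_aElt] at h1; omega)
      | (rw [off_bElt] at h1; omega)
  rw [Finset.card_union_of_disjoint hdisj, Finset.card_image_of_injOn hinj]
  have c3 : ({xElt q i, aElt q i, bElt q i} : Finset (Fin (Nd q))).card = 3 := by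
    rw [Finset.card_insert_of_notMem, Finset.card_insert_of_notMem,
      Finset.card_singleton]
    · intro hmem
      have : off q (aElt q i) = off q (bElt q i) := by
        rw [Finset.mem_singleton.mp hmem]
      rw [off_aElt, off_bElt] at this; omega
    · intro hmem
      simp only [Finset.mem_insert, Finset.mem_singleton] at hmem
      rcases hmem with h2 | h2
      · have : off q (xElt q i) = off q (aElt q i) := by rw [h2]
        rw [off_xElt, off_aElt] at this; omega
      · have : off q (xElt q i) = off q (bElt q i) := by rw [h2]
        rw [off_xElt, off_bElt] at this; omega
  rw [c3, Nat.card_Icc]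
  omega

/-- the intersecting families -/
def Fam (q : ℕ) (i : Fin (Md q)) : Finset (Finset (Fin (Nd q))) :=
  Finset.univ.filter (fun A => A.card = q+3 ∧
    ((xi q i ∈ A ∧ (A ∩ W q i).Nonempty) ∨ W q i ⊆ A))

lemma mem_Fam {q : ℕ} {i : Fin (Md q)} {A : Finset (Fin (Nd q))} :
    A ∈ Fam q i ↔ (A.card = q+3 ∧
      ((xi q i ∈ A ∧ (A ∩ W q i).Nonempty) ∨ W q i ⊆ A)) := by
  unfold Fam
  simp

lemma Fam_card {q : ℕ} {i : Fin (Md q)} {A : Finset (Fin (Nd q))} (h : A ∈ Fam q i) :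
    A.card = q+3 := (mem_Fam.mp h).1

lemma Fam_intersecting {q : ℕ} {i : Fin (Md q)} {A B : Finset (Fin (Nd q))}
    (hA : A ∈ Fam q i) (hB : B ∈ Fam q i) : (A ∩ B).Nonempty := by
  rcases (mem_Fam.mp hA).2 with ⟨hxA, hiA⟩ | hWA
  · rcases (mem_Fam.mp hB).2 with ⟨hxB, -⟩ | hWB
    · exact ⟨xi q i, Finset.mem_inter.mpr ⟨hxA, hxB⟩⟩
    · obtain ⟨w, hw⟩ := hiA
      obtain ⟨hwA, hwW⟩ := Finset.mem_inter.mp hw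
      exact ⟨w, Finset.mem_inter.mpr ⟨hwA, hWB hwW⟩⟩
  · rcases (mem_Fam.mp hB).2 with ⟨-, hiB⟩ | hWB
    · obtain ⟨w, hw⟩ := hiB
      obtain ⟨hwB, hwW⟩ := Finset.mem_inter.mp hw
      exact ⟨w, Finset.mem_inter.mpr ⟨hWA hwW, hwB⟩⟩
    · exact ⟨aElt q i, Finset.mem_inter.mpr ⟨hWA (aElt_mem_W q i), hWB (aElt_mem_W q i)⟩⟩


/-- Coverage of a pair within one block. -/
lemma cover_pair {q : ℕ} {A : Finset (Fin (Nd q))} (hcard : A.card = q+3)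
    {u v : Fin (Nd q)} (hu : u ∈ A) (hv : v ∈ A)
    (hb : blk q u = blk q v) (hlt : off q u < off q v) : ∃ i, A ∈ Fam q i := by
  set s := blk q u with hs
  have hslt : s < q+2 := blk_lt q u
  set p := off q u with hp
  set r := off q v with hr
  have hrlt : r < 2*q+4 := off_lt q v
  have humk : u = mk q s p :=
    ext_blk_off (by rw [blk_mk hslt (by omega : p < 2*q+4)]) (by rw [off_mk hslt (by omega : p < 2*q+4)])
  have hvmk : v = mk q s r := by
    refine ext_blk_off ?_ ?_
    · rw [blk_mk hslt hrlt, ← hb]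
    · rw [off_mk hslt hrlt]
  rcases (show (r ≤ 2*q ∧ r - p ≤ q) ∨ (r ≤ 2*q ∧ q < r - p) ∨ (p ≤ 2*q ∧ 2*q+1 ≤ r)
      ∨ (p = 2*q+1) ∨ (p = 2*q+2 ∧ r = 2*q+3) by omega) with
    ⟨h1, h2⟩ | ⟨h1, h2⟩ | ⟨h1, h2⟩ | h1 | ⟨h1, h2⟩
  · -- both in Z-part, close: center at p, v = zElt
    refine ⟨mkI q s p, mem_Fam.mpr ⟨hcard, Or.inl ⟨?_, ⟨v, Finset.mem_inter.mpr ⟨hv, ?_⟩⟩⟩⟩⟩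
    · have : xi q (mkI q s p) = u := by
        rw [humk]; unfold xi
        rw [cs_mkI hslt (by omega), cj_mkI hslt (by omega)]
      rw [this]; exact hu
    · have hcs := cs_mkI hslt (show p < 2*q+2 by omega)
      have hcj := cj_mkI hslt (show p < 2*q+2 by omega)
      have hz : zElt q (mkI q s p) (r - p) = v := by
        unfold zElt
        rw [hcs, hcj, hvmk]
        congr 1
        rw [Nat.mod_eq_of_lt (by omega)]
        omega
      rw [← hz]
      exact zElt_mem_W (by omega) (Finset.mem_Icc.mpr (by omega))
  · -- both in Z-part, far: center at r, u = zElt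
    refine ⟨mkI q s r, mem_Fam.mpr ⟨hcard, Or.inl ⟨?_, ⟨u, Finset.mem_inter.mpr ⟨hu, ?_⟩⟩⟩⟩⟩
    · have : xi q (mkI q s r) = v := by
        rw [hvmk]; unfold xi
        rw [cs_mkI hslt (by omega), cj_mkI hslt (by omega)]
      rw [this]; exact hv
    · have hcs := cs_mkI hslt (show r < 2*q+2 by omega)
      have hcj := cj_mkI hslt (show r < 2*q+2 by omega)
      have hz : zElt q (mkI q s r) (2*q+1 - (r - p)) = u := by
        unfold zElt
        rw [hcs, hcj, humk]
        congr 1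
        have hx : r + (2*q+1 - (r-p)) = p + (2*q+1) := by omega
        rw [hx]
        have := mod2 (show 0 < 2*q+1 by omega) (show p + (2*q+1) < 2*(2*q+1) by omega)
        have hm := Nat.mod_lt (p + (2*q+1)) (show 0 < 2*q+1 by omega)
        omega
      rw [← hz]
      exact zElt_mem_W (by omega) (Finset.mem_Icc.mpr (by omega))
  · -- u in Z-part, v special: center at p
    refine ⟨mkI q s p, mem_Fam.mpr ⟨hcard, Or.inl ⟨?_, ⟨v, Finset.mem_inter.mpr ⟨hv, ?_⟩⟩⟩⟩⟩
    · have : xi q (mkI q s p) = u := by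
        rw [humk]; unfold xi
        rw [cs_mkI hslt (by omega), cj_mkI hslt (by omega)]
      rw [this]; exact hu
    · have hcs := cs_mkI hslt (show p < 2*q+2 by omega)
      have hcj := cj_mkI hslt (show p < 2*q+2 by omega)
      rcases (show r = 2*q+1 ∨ r = 2*q+2 ∨ r = 2*q+3 by omega) with h3 | h3 | h3
      · have : xElt q (mkI q s p) = v := by
          unfold xElt; rw [hcs, hvmk, h3]
        rw [← this]; exact xElt_mem_W (by omega)
      · have : aElt q (mkI q s p) = v := by
          unfold aElt; rw [hcs, hvmk, h3]
        rw [← this]; exact aElt_mem_W q _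
      · have : bElt q (mkI q s p) = v := by
          unfold bElt; rw [hcs, hvmk, h3]
        rw [← this]; exact bElt_mem_W q _
  · -- u = x element: triangle condition
    refine ⟨mkI q s (2*q+1), mem_Fam.mpr ⟨hcard, Or.inl ⟨?_, ⟨v, Finset.mem_inter.mpr ⟨hv, ?_⟩⟩⟩⟩⟩
    · have : xi q (mkI q s (2*q+1)) = u := by
        rw [humk, h1]; unfold xi
        rw [cs_mkI hslt (by omega), cj_mkI hslt (by omega)]
      rw [this]; exact hu
    · have hcs := cs_mkI hslt (show 2*q+1 < 2*q+2 by omega)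
      rcases (show r = 2*q+2 ∨ r = 2*q+3 by omega) with h3 | h3
      · have : aElt q (mkI q s (2*q+1)) = v := by
          unfold aElt; rw [hcs, hvmk, h3]
        rw [← this]; exact aElt_mem_W q _
      · have : bElt q (mkI q s (2*q+1)) = v := by
          unfold bElt; rw [hcs, hvmk, h3]
        rw [← this]; exact bElt_mem_W q _
  · -- {u,v} = {a,b}: type2 via triangle condition
    refine ⟨mkI q s (2*q+1), mem_Fam.mpr ⟨hcard, Or.inr ?_⟩⟩
    have hcs := cs_mkI hslt (show 2*q+1 < 2*q+2 by omega)
    have hcj := cj_mkI hslt (show 2*q+1 < 2*q+2 by omega)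
    unfold W
    rw [if_pos hcj]
    have ha : aElt q (mkI q s (2*q+1)) = u := by
      unfold aElt; rw [hcs, humk, h1]
    have hbb : bElt q (mkI q s (2*q+1)) = v := by
      unfold bElt; rw [hcs, hvmk, h2]
    intro e he
    rcases Finset.mem_insert.mp he with he | he
    · rw [he, ha]; exact hu
    · rw [Finset.mem_singleton.mp he, hbb]; exact hv

/-- full coverage -/
lemma cover (q : ℕ) (A : Finset (Fin (Nd q))) (hcard : A.card = q+3) :
    ∃ i, A ∈ Fam q i := by
  have hmaps : ∀ a ∈ A, blk q a ∈ Finset.range (q+2) := by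
    intro a _; exact Finset.mem_range.mpr (blk_lt q a)
  have hlt : (Finset.range (q+2)).card < A.card := by
    rw [Finset.card_range, hcard]; omega
  obtain ⟨u, hu, v, hv, hne, hbe⟩ :=
    Finset.exists_ne_map_eq_of_card_lt_of_maps_to hlt hmaps
  have hoff : off q u ≠ off q v := by
    intro h
    exact hne (ext_blk_off hbe h)
  rcases Nat.lt_or_ge (off q u) (off q v) with h | h
  · exact cover_pair hcard hu hv hbe h
  · exact cover_pair hcard hv hu hbe.symm (by omega)


/-! Witness sets -/

def pk (q : ℕ) (y : Fin (Nd q)) (t : ℕ) : Fin (Nd q) :=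
  if blk q y = t ∧ off q y = 2*q+2 then mk q t (2*q+3) else mk q t (2*q+2)

lemma blk_pk {q : ℕ} (y : Fin (Nd q)) {t : ℕ} (ht : t < q+2) : blk q (pk q y t) = t := by
  unfold pk; split <;> exact blk_mk ht (by omega)

lemma off_pk {q : ℕ} (y : Fin (Nd q)) {t : ℕ} (ht : t < q+2) :
    off q (pk q y t) = 2*q+2 ∨ off q (pk q y t) = 2*q+3 := by
  unfold pk; split
  · right; exact off_mk ht (by omega)
  · left; exact off_mk ht (by omega)

lemma pk_ne {q : ℕ} (y : Fin (Nd q)) {t : ℕ} (ht : t < q+2) : pk q y t ≠ y := by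
  unfold pk; split
  case isTrue hc =>
    intro heq
    have : off q (mk q t (2*q+3)) = off q y := by rw [heq]
    rw [off_mk ht (by omega), hc.2] at this
    omega
  case isFalse hc =>
    intro heq
    apply hc
    constructor
    · rw [← heq, blk_mk ht (by omega)]
    · rw [← heq, off_mk ht (by omega)]

def picks (q : ℕ) (y : Fin (Nd q)) : Finset (Fin (Nd q)) :=
  (Finset.range (q+2)).image (pk q y)

lemma mem_picks_off {q : ℕ} {y e : Fin (Nd q)} (h : e ∈ picks q y) :
    2*q+2 ≤ off q e := by
  obtain ⟨t, ht, rfl⟩ := Finset.mem_image.mp h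
  have ht' := Finset.mem_range.mp ht
  rcases off_pk y ht' with h | h <;> omega

lemma picks_blk_inj {q : ℕ} {y e e' : Fin (Nd q)} (h : e ∈ picks q y)
    (h' : e' ∈ picks q y) (hb : blk q e = blk q e') : e = e' := by
  obtain ⟨t, ht, rfl⟩ := Finset.mem_image.mp h
  obtain ⟨t', ht', rfl⟩ := Finset.mem_image.mp h'
  have ht2 := Finset.mem_range.mp ht
  have ht2' := Finset.mem_range.mp ht'
  rw [blk_pk y ht2, blk_pk y ht2'] at hb
  rw [hb]

lemma y_not_mem_picks {q : ℕ} (y : Fin (Nd q)) : y ∉ picks q y := by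
  intro h
  obtain ⟨t, ht, heq⟩ := Finset.mem_image.mp h
  exact pk_ne y (Finset.mem_range.mp ht) heq

lemma pk_mem_picks {q : ℕ} (y : Fin (Nd q)) {t : ℕ} (ht : t < q+2) :
    pk q y t ∈ picks q y :=
  Finset.mem_image_of_mem _ (Finset.mem_range.mpr ht)

lemma picks_card {q : ℕ} (y : Fin (Nd q)) : (picks q y).card = q+2 := by
  unfold picks
  rw [Finset.card_image_of_injOn, Finset.card_range]
  intro t ht t' ht' heq
  simp only [Finset.coe_range, Set.mem_Iio] at ht ht'
  have : blk q (pk q y t) = blk q (pk q y t') := by rw [heq]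
  rwa [blk_pk y ht, blk_pk y ht'] at this

lemma pk_mem_W {q : ℕ} (y : Fin (Nd q)) (i : Fin (Md q)) :
    pk q y (cs q i) ∈ W q i := by
  unfold pk
  split
  · exact bElt_mem_W q i
  · exact aElt_mem_W q i

/-- The main witness: center plus one pick per block. -/
def witP (q : ℕ) (i : Fin (Md q)) (y : Fin (Nd q)) : Finset (Fin (Nd q)) :=
  insert (xi q i) (picks q y)

lemma xi_not_mem_picks {q : ℕ} (i : Fin (Md q)) (y : Fin (Nd q)) :
    xi q i ∉ picks q y := by
  intro h
  have h1 := mem_picks_off h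
  rw [off_xi] at h1
  have := cj_lt q i
  omega

lemma witP_card (q : ℕ) (i : Fin (Md q)) (y : Fin (Nd q)) : (witP q i y).card = q+3 := by
  unfold witP
  rw [Finset.card_insert_of_notMem (xi_not_mem_picks i y), picks_card]

lemma witP_mem (q : ℕ) (i : Fin (Md q)) (y : Fin (Nd q)) : witP q i y ∈ Fam q i := by
  refine mem_Fam.mpr ⟨witP_card q i y, Or.inl ⟨Finset.mem_insert_self _ _, ?_⟩⟩
  refine ⟨pk q y (cs q i), Finset.mem_inter.mpr ⟨?_, pk_mem_W y i⟩⟩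
  exact Finset.mem_insert_of_mem (pk_mem_picks y (cs_lt q i))

lemma witP_avoid {q : ℕ} {i : Fin (Md q)} {y : Fin (Nd q)} (hy : y ≠ xi q i) :
    y ∉ witP q i y := by
  intro h
  rcases Finset.mem_insert.mp h with h | h
  · exact hy h
  · exact y_not_mem_picks y h

lemma witP_unique {q : ℕ} {i : Fin (Md q)} {y : Fin (Nd q)} {j : Fin (Md q)}
    (hj : witP q i y ∈ Fam q j) : j = i := by
  rcases (mem_Fam.mp hj).2 with ⟨hxj, -⟩ | hWj
  · rcases Finset.mem_insert.mp hxj with h | h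
    · exact xi_inj h
    · exfalso
      have h1 := mem_picks_off h
      rw [off_xi] at h1
      have := cj_lt q j
      omega
  · exfalso
    have ha : aElt q j ∈ witP q i y := hWj (aElt_mem_W q j)
    have hb : bElt q j ∈ witP q i y := hWj (bElt_mem_W q j)
    have hcj := cj_lt q i
    have ha' : aElt q j ∈ picks q y := by
      rcases Finset.mem_insert.mp ha with h | h
      · exfalso
        have : off q (aElt q j) = off q (xi q i) := by rw [h]
        rw [off_aElt, off_xi] at this; omega
      · exact h
    have hb' : bElt q j ∈ picks q y := by
      rcases Finset.mem_insert.mp hb with h | h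
      · exfalso
        have : off q (bElt q j) = off q (xi q i) := by rw [h]
        rw [off_bElt, off_xi] at this; omega
      · exact h
    have : aElt q j = bElt q j := by
      apply picks_blk_inj ha' hb'
      rw [blk_aElt, blk_bElt]
    have ho : off q (aElt q j) = off q (bElt q j) := by rw [this]
    rw [off_aElt, off_bElt] at ho
    omega

lemma W_ne_witP {q : ℕ} (j i : Fin (Md q)) (y : Fin (Nd q)) : W q j ≠ witP q i y := by
  intro heq
  have h0 : pk q y 0 ∈ W q j := by
    rw [heq]; exact Finset.mem_insert_of_mem (pk_mem_picks y (by omega))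
  have h1 : pk q y 1 ∈ W q j := by
    rw [heq]; exact Finset.mem_insert_of_mem (pk_mem_picks y (by omega))
  have b0 := W_mem_blk h0
  have b1 := W_mem_blk h1
  rw [blk_pk y (by omega)] at b0
  rw [blk_pk y (by omega)] at b1
  omega


/-! Witness for triangle conditions avoiding the center. -/

def witT (q : ℕ) (i : Fin (Md q)) : Finset (Fin (Nd q)) :=
  insert (aElt q i) (insert (bElt q i)
    (((Finset.range (q+2)).erase (cs q i)).image (fun t => mk q t (2*q+2))))

lemma witT_img_mem {q : ℕ} {i : Fin (Md q)} {e : Fin (Nd q)}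
    (h : e ∈ ((Finset.range (q+2)).erase (cs q i)).image (fun t => mk q t (2*q+2))) :
    blk q e ≠ cs q i ∧ blk q e < q+2 ∧ off q e = 2*q+2 := by
  obtain ⟨t, ht, rfl⟩ := Finset.mem_image.mp h
  have h1 := Finset.mem_erase.mp ht
  have h2 := Finset.mem_range.mp h1.2
  refine ⟨?_, ?_, off_mk h2 (by omega)⟩
  · rw [blk_mk h2 (by omega)]; exact h1.1
  · rw [blk_mk h2 (by omega)]; exact h2

lemma witT_mem_off {q : ℕ} {i : Fin (Md q)} {e : Fin (Nd q)} (h : e ∈ witT q i) :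
    off q e = 2*q+2 ∨ off q e = 2*q+3 := by
  rcases Finset.mem_insert.mp h with h | h
  · left; rw [h, off_aElt]
  rcases Finset.mem_insert.mp h with h | h
  · right; rw [h, off_bElt]
  · left; exact (witT_img_mem h).2.2

lemma witT_card (q : ℕ) (i : Fin (Md q)) : (witT q i).card = q+3 := by
  unfold witT
  have himg : (((Finset.range (q+2)).erase (cs q i)).image
      (fun t => mk q t (2*q+2))).card = q+1 := by
    have hinj : Set.InjOn (fun t => mk q t (2*q+2))
        ((Finset.range (q+2)).erase (cs q i)) := by
      intro t ht t' ht' heq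
      simp only [Finset.coe_erase, Set.mem_diff, Finset.coe_range, Set.mem_Iio] at ht ht'
      have : blk q (mk q t (2*q+2)) = blk q (mk q t' (2*q+2)) := by
        simp only at heq; rw [heq]
      rwa [blk_mk ht.1 (by omega), blk_mk ht'.1 (by omega)] at this
    rw [Finset.card_image_of_injOn hinj, Finset.card_erase_of_mem
      (Finset.mem_range.mpr (cs_lt q i)), Finset.card_range]
    omega
  have hb : bElt q i ∉ ((Finset.range (q+2)).erase (cs q i)).image
      (fun t => mk q t (2*q+2)) := by
    intro h
    have := (witT_img_mem h).2.2
    rw [off_bElt] at this; omega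
  have ha : aElt q i ∉ insert (bElt q i) (((Finset.range (q+2)).erase (cs q i)).image
      (fun t => mk q t (2*q+2))) := by
    intro h
    rcases Finset.mem_insert.mp h with h | h
    · have : off q (aElt q i) = off q (bElt q i) := by rw [h]
      rw [off_aElt, off_bElt] at this; omega
    · have := (witT_img_mem h).1
      rw [blk_aElt] at this; exact this rfl
  rw [Finset.card_insert_of_notMem ha, Finset.card_insert_of_notMem hb, himg]

lemma witT_mem {q : ℕ} {i : Fin (Md q)} (htri : cj q i = 2*q+1) : witT q i ∈ Fam q i := by
  refine mem_Fam.mpr ⟨witT_card q i, Or.inr ?_⟩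
  unfold W
  rw [if_pos htri]
  intro e he
  rcases Finset.mem_insert.mp he with he | he
  · rw [he]; exact Finset.mem_insert_self _ _
  · rw [Finset.mem_singleton.mp he]
    exact Finset.mem_insert_of_mem (Finset.mem_insert_self _ _)

lemma witT_avoid {q : ℕ} {i : Fin (Md q)} (htri : cj q i = 2*q+1) :
    xi q i ∉ witT q i := by
  intro h
  have := witT_mem_off h
  rw [off_xi, htri] at this
  omega

lemma witT_unique {q : ℕ} {i : Fin (Md q)} (htri : cj q i = 2*q+1) {j : Fin (Md q)}
    (hj : witT q i ∈ Fam q j) : j = i := by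
  rcases (mem_Fam.mp hj).2 with ⟨hxj, -⟩ | hWj
  · exfalso
    have h1 := witT_mem_off hxj
    rw [off_xi] at h1
    have := cj_lt q j
    omega
  · -- b element of block (cs j) is in witT, must equal bElt i
    have hb : bElt q j ∈ witT q i := hWj (bElt_mem_W q j)
    have hcs : cs q j = cs q i := by
      rcases Finset.mem_insert.mp hb with h | h
      · exfalso
        have : off q (bElt q j) = off q (aElt q i) := by rw [h]
        rw [off_bElt, off_aElt] at this; omega
      rcases Finset.mem_insert.mp h with h | h
      · have : blk q (bElt q j) = blk q (bElt q i) := by rw [h]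
        rwa [blk_bElt, blk_bElt] at this
      · exfalso
        have := (witT_img_mem h).2.2
        rw [off_bElt] at this; omega
    by_cases hj2 : cj q j = 2*q+1
    · exact eqI hcs (by rw [hj2, htri])
    · exfalso
      have hx : xElt q j ∈ witT q i := hWj (xElt_mem_W hj2)
      have := witT_mem_off hx
      rw [off_xElt] at this
      omega

lemma W_ne_witT {q : ℕ} (j i : Fin (Md q)) : W q j ≠ witT q i := by
  intro heq
  -- witT contains aElt i (block cs i) and an element of another block
  set t0 : ℕ := if cs q i = 0 then 1 else 0 with ht0
  have ht0lt : t0 < q+2 := by rw [ht0]; split <;> omega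
  have ht0ne : t0 ≠ cs q i := by rw [ht0]; split <;> omega
  have hmem : mk q t0 (2*q+2) ∈ witT q i := by
    unfold witT
    refine Finset.mem_insert_of_mem (Finset.mem_insert_of_mem ?_)
    exact Finset.mem_image_of_mem _ (Finset.mem_erase.mpr
      ⟨ht0ne, Finset.mem_range.mpr ht0lt⟩)
  have h1 : aElt q i ∈ W q j := by rw [heq]; exact Finset.mem_insert_self _ _
  have h2 : mk q t0 (2*q+2) ∈ W q j := by rw [heq]; exact hmem
  have b1 := W_mem_blk h1
  have b2 := W_mem_blk h2
  rw [blk_aElt] at b1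
  rw [blk_mk ht0lt (by omega)] at b2
  exact ht0ne (by rw [b2, b1])

/-! Injectivity of `W` on star conditions. -/

lemma W_star_inj {q : ℕ} {i j : Fin (Md q)} (hi : cj q i ≠ 2*q+1) (hj : cj q j ≠ 2*q+1)
    (hW : W q i = W q j) : i = j := by
  have hcs : cs q i = cs q j := by
    have h1 : aElt q i ∈ W q j := by rw [← hW]; exact aElt_mem_W q i
    have := W_mem_blk h1
    rw [blk_aElt] at this
    exact this
  refine eqI hcs ?_
  by_contra hne
  have hci := cj_lt q i
  have hcj2 := cj_lt q j
  -- arcs absorb: one center's offset appears in the other's W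
  rcases Nat.lt_or_ge (cj q i) (cj q j) with hlt | hge
  · rcases (show (cj q j - cj q i ≤ q) ∨ (q < cj q j - cj q i) by omega) with hd | hd
    · -- zElt i (d) has offset cj j, lies in W i = W j, contradicting W_off_ne_center
      have hmem : zElt q i (cj q j - cj q i) ∈ W q j := by
        rw [← hW]
        exact zElt_mem_W hi (Finset.mem_Icc.mpr (by omega))
      have := W_off_ne_center hmem
      rw [off_zElt, Nat.mod_eq_of_lt (by omega)] at this
      omega
    · have hmem : zElt q j (2*q+1 - (cj q j - cj q i)) ∈ W q i := by
        rw [hW]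
        exact zElt_mem_W hj (Finset.mem_Icc.mpr (by omega))
      have := W_off_ne_center hmem
      rw [off_zElt] at this
      have hx : cj q j + (2*q+1 - (cj q j - cj q i)) = cj q i + (2*q+1) := by omega
      rw [hx] at this
      have hm2 := mod2 (show 0 < 2*q+1 by omega)
        (show cj q i + (2*q+1) < 2*(2*q+1) by omega)
      have hmlt := Nat.mod_lt (cj q i + (2*q+1)) (show 0 < 2*q+1 by omega)
      omega
  · have hlt : cj q j < cj q i := by omega
    rcases (show (cj q i - cj q j ≤ q) ∨ (q < cj q i - cj q j) by omega) with hd | hd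
    · have hmem : zElt q j (cj q i - cj q j) ∈ W q i := by
        rw [hW]
        exact zElt_mem_W hj (Finset.mem_Icc.mpr (by omega))
      have := W_off_ne_center hmem
      rw [off_zElt, Nat.mod_eq_of_lt (by omega)] at this
      omega
    · have hmem : zElt q i (2*q+1 - (cj q i - cj q j)) ∈ W q j := by
        rw [← hW]
        exact zElt_mem_W hi (Finset.mem_Icc.mpr (by omega))
      have := W_off_ne_center hmem
      rw [off_zElt] at this
      have hx : cj q i + (2*q+1 - (cj q i - cj q j)) = cj q j + (2*q+1) := by omega
      rw [hx] at this
      have hm2 := mod2 (show 0 < 2*q+1 by omega)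
        (show cj q j + (2*q+1) < 2*(2*q+1) by omega)
      have hmlt := Nat.mod_lt (cj q j + (2*q+1)) (show 0 < 2*q+1 by omega)
      omega

lemma xi_not_mem_W (q : ℕ) (i : Fin (Md q)) : xi q i ∉ W q i := by
  intro h
  exact W_off_ne_center h (off_xi q i)


/-! The coloring -/

noncomputable def colr (q : ℕ) (A : {A : Finset (Fin (Nd q)) // A.card = q+3}) :
    Fin (Md q) :=
  if h : ∃ j, cj q j ≠ 2*q+1 ∧ W q j = A.1 then h.choose else (cover q A.1 A.2).choose

lemma colr_mem (q : ℕ) (A : {A : Finset (Fin (Nd q)) // A.card = q+3}) :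
    A.1 ∈ Fam q (colr q A) := by
  unfold colr
  split
  case isTrue h =>
    obtain ⟨h1, h2⟩ := h.choose_spec
    exact mem_Fam.mpr ⟨A.2, Or.inr (by rw [h2])⟩
  case isFalse h => exact (cover q A.1 A.2).choose_spec

lemma colr_special {q : ℕ} {A : {A : Finset (Fin (Nd q)) // A.card = q+3}}
    (h : ∃ j, cj q j ≠ 2*q+1 ∧ W q j = A.1) :
    cj q (colr q A) ≠ 2*q+1 ∧ W q (colr q A) = A.1 := by
  unfold colr
  rw [dif_pos h]
  exact h.choose_spec

lemma colr_unique {q : ℕ} {A : {A : Finset (Fin (Nd q)) // A.card = q+3}}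
    {i : Fin (Md q)} (hns : ¬ ∃ j, cj q j ≠ 2*q+1 ∧ W q j = A.1)
    (huniq : ∀ j, A.1 ∈ Fam q j → j = i) : colr q A = i := by
  unfold colr
  rw [dif_neg hns]
  exact huniq _ (cover q A.1 A.2).choose_spec

/-! Main assembled theorem -/

theorem aux (q k N M : ℕ) (hk : k = q+3) (hN : N = Nd q) (hM : M = Md q) :
    (∃ F : Fin M → Finset (Finset (Fin N)),
      (∀ i, ∀ A ∈ F i, A.card = k) ∧
      (∀ i, ∀ A ∈ F i, ∀ B ∈ F i, (A ∩ B).Nonempty) ∧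
      (∀ A : Finset (Fin N), A.card = k → ∃ i, A ∈ F i) ∧
      (∀ i, ¬ ∃ x : Fin N, ∀ A ∈ F i, x ∈ A)) ∧
    (∃ c : {A : Finset (Fin N) // A.card = k} → Fin M,
      (∀ A B : {A : Finset (Fin N) // A.card = k},
        A ≠ B → Disjoint A.1 B.1 → c A ≠ c B) ∧
      (∀ i, ¬ ∃ x : Fin N,
        ∀ A : {A : Finset (Fin N) // A.card = k}, c A = i → x ∈ A.1)) := by
  subst hk hN hM
  constructor
  · refine ⟨Fam q, ?_, ?_, ?_, ?_⟩
    · intro i A hA; exact Fam_card hA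
    · intro i A hA B hB; exact Fam_intersecting hA hB
    · intro A hA; exact cover q A hA
    · intro i hx
      obtain ⟨x, hx⟩ := hx
      by_cases htri : cj q i = 2*q+1
      · by_cases hxc : x = xi q i
        · have h1 := hx _ (witT_mem htri)
          rw [hxc] at h1
          exact witT_avoid htri h1
        · exact witP_avoid hxc (hx _ (witP_mem q i x))
      · by_cases hxc : x = xi q i
        · have hmem : W q i ∈ Fam q i :=
            mem_Fam.mpr ⟨W_card htri, Or.inr (by rfl)⟩
          have h1 := hx _ hmem
          rw [hxc] at h1
          exact xi_not_mem_W q i h1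
        · exact witP_avoid hxc (hx _ (witP_mem q i x))
  · refine ⟨colr q, ?_, ?_⟩
    · intro A B hne hd hceq
      have h1 := colr_mem q A
      have h2 := colr_mem q B
      rw [← hceq] at h2
      obtain ⟨w, hw⟩ := Fam_intersecting h1 h2
      obtain ⟨hwA, hwB⟩ := Finset.mem_inter.mp hw
      exact Finset.disjoint_left.mp hd hwA hwB
    · intro i hx
      obtain ⟨x, hx⟩ := hx
      by_cases htri : cj q i = 2*q+1
      · by_cases hxc : x = xi q i
        · set A : {A : Finset (Fin (Nd q)) // A.card = q+3} :=
            ⟨witT q i, witT_card q i⟩ with hA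
          have hcA : colr q A = i := by
            apply colr_unique
            · rintro ⟨j, -, hWj⟩
              exact W_ne_witT j i hWj
            · intro j hj
              exact witT_unique htri hj
          have h1 := hx A hcA
          rw [hxc] at h1
          exact witT_avoid htri h1
        · set A : {A : Finset (Fin (Nd q)) // A.card = q+3} :=
            ⟨witP q i x, witP_card q i x⟩ with hA
          have hcA : colr q A = i := by
            apply colr_unique
            · rintro ⟨j, -, hWj⟩
              exact W_ne_witP j i x hWj
            · intro j hj
              exact witP_unique hj
          exact witP_avoid hxc (hx A hcA)
      · by_cases hxc : x = xi q i
        · set A : {A : Finset (Fin (Nd q)) // A.card = q+3} :=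
            ⟨W q i, W_card htri⟩ with hA
          have hsp : ∃ j, cj q j ≠ 2*q+1 ∧ W q j = A.1 := ⟨i, htri, rfl⟩
          obtain ⟨hst, hWeq⟩ := colr_special hsp
          have hcA : colr q A = i := W_star_inj hst htri hWeq
          have h1 := hx A hcA
          rw [hxc] at h1
          exact xi_not_mem_W q i h1
        · set A : {A : Finset (Fin (Nd q)) // A.card = q+3} :=
            ⟨witP q i x, witP_card q i x⟩ with hA
          have hcA : colr q A = i := by
            apply colr_unique
            · rintro ⟨j, -, hWj⟩
              exact W_ne_witP j i x hWj
            · intro j hj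
              exact witP_unique hj
          exact witP_avoid hxc (hx A hcA)

end CWStar

/-- For every `k ≥ 3` and `n = 2(k−1)²`, there is a covering of all `k`-element subsets
of `[n]` by `n − 2k + 2` intersecting families, none of which is contained in a star;
in particular, `KG_{n,k}` has a proper coloring with `χ(KG_{n,k}) = n − 2k + 2` colors
in which no color class is contained in a star. -/
theorem covering_without_stars (k : ℕ) (hk : 3 ≤ k) :
    (∃ F : Fin (2 * (k - 1) ^ 2 - 2 * k + 2) → Finset (Finset (Fin (2 * (k - 1) ^ 2))),
      (∀ i, ∀ A ∈ F i, A.card = k) ∧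
      (∀ i, ∀ A ∈ F i, ∀ B ∈ F i, (A ∩ B).Nonempty) ∧
      (∀ A : Finset (Fin (2 * (k - 1) ^ 2)), A.card = k → ∃ i, A ∈ F i) ∧
      (∀ i, ¬ ∃ x : Fin (2 * (k - 1) ^ 2), ∀ A ∈ F i, x ∈ A)) ∧
    (∃ c : {A : Finset (Fin (2 * (k - 1) ^ 2)) // A.card = k} →
        Fin (2 * (k - 1) ^ 2 - 2 * k + 2),
      (∀ A B : {A : Finset (Fin (2 * (k - 1) ^ 2)) // A.card = k},
        A ≠ B → Disjoint A.1 B.1 → c A ≠ c B) ∧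
      (∀ i, ¬ ∃ x : Fin (2 * (k - 1) ^ 2),
        ∀ A : {A : Finset (Fin (2 * (k - 1) ^ 2)) // A.card = k}, c A = i → x ∈ A.1)) := by
  obtain ⟨e, rfl⟩ : ∃ e, k = e + 3 := ⟨k - 3, by omega⟩
  have h1 : e + 3 - 1 = e + 2 := by omega
  have hN : 2 * (e + 3 - 1) ^ 2 = CWStar.Nd e := by
    rw [h1]
    unfold CWStar.Nd
    ring
  have hM : 2 * (e + 3 - 1) ^ 2 - 2 * (e + 3) + 2 = CWStar.Md e := by
    have h2 : 2 * (e + 2) ^ 2 = 2*(e*e)+8*e+8 := by ring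
    have h3 : CWStar.Md e = 2*(e*e)+6*e+4 := by unfold CWStar.Md; ring
    rw [h1, h2, h3]
    omega
  exact CWStar.aux e (e + 3) _ _ rfl hN hM
end

section
/- For every function k : ℕ → ℕ with 2 ≤ k(n) and n ≥ 2k(n), the following holds asymptotically almost surely for the random Kneser graph KG_{n,k(n)}(1/2): for every integer b with 1 ≤ b ≤ n, every b-element subset B ⊆ [n], and every family A of k(n)-element subsets of B that is an independent set in KG_{n,k(n)}(1/2), the number e(A) of unordered pairs of disjoint sets in A satisfies e(A) ≤ 2·( |A|·k(n)·log₂ b + b·log₂ n ). -/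
open Filter

/-- The Kneser graph `KG_{n,k}`: vertices are the `k`-element subsets of `[n]`,
with edges connecting pairs of disjoint sets. -/
def kneserGraph (n k : ℕ) : SimpleGraph {A : Finset (Fin n) // A.card = k} where
  Adj A B := A ≠ B ∧ Disjoint A.1 B.1
  symm := ⟨fun _ _ h => ⟨h.1.symm, h.2.symm⟩⟩
  loopless := ⟨fun _ h => h.1 rfl⟩

/-- The fraction of spanning subgraphs of `kneserGraph n (k n)` satisfying `P n`. -/
noncomputable def kneserFraction (k : ℕ → ℕ)
    (P : (n : ℕ) → SimpleGraph {A : Finset (Fin n) // A.card = k n} → Prop) (n : ℕ) : ℝ :=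
  (Nat.card {G : SimpleGraph {A : Finset (Fin n) // A.card = k n} //
      G ≤ kneserGraph n (k n) ∧ P n G} : ℝ) /
    2 ^ (Nat.card (kneserGraph n (k n)).edgeSet)

/-- `KG_{n, k(n)}(1/2)` asymptotically almost surely satisfies `P`. -/
def kneserAAS (k : ℕ → ℕ)
    (P : (n : ℕ) → SimpleGraph {A : Finset (Fin n) // A.card = k n} → Prop) : Prop :=
  Tendsto (kneserFraction k P) atTop (nhds 1)

/-- `e(𝒜)`: the number of unordered pairs of disjoint sets in a family `𝒜` of vertices
of a Kneser graph. -/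
noncomputable def numDisjPairs {n k : ℕ} (𝒜 : Finset {A : Finset (Fin n) // A.card = k}) : ℕ :=
  {p : Sym2 {A : Finset (Fin n) // A.card = k} |
    ∃ F ∈ 𝒜, ∃ F' ∈ 𝒜, F ≠ F' ∧ Disjoint F.1 F'.1 ∧ p = s(F, F')}.ncard

/-! A first-moment argument. A fixed family `𝒜` is independent in a uniformly random spanning
subgraph of `KG_{n,k}` with probability `2 ^ (-e(𝒜))`, which for a family violating the bound
is less than `b ^ (-2k|𝒜|) n ^ (-2b)`. A union bound over all `B ≠ ∅` and all subfamilies `𝒜`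
of the at most `b ^ k` vertices inside `B` bounds the failure probability by
`∑_B n ^ (-2|B|) (1 + b ^ (-2k)) ^ (b ^ k) ≤ e · ∑_{B ≠ ∅} n ^ (-2|B|) ≤ e² / n`. -/

namespace SimpleGraph

variable {V : Type*}

theorem edgeSet_fromEdgeSet_of_subset {H : SimpleGraph V} {s : Set (Sym2 V)}
    (hs : s ⊆ H.edgeSet) : (fromEdgeSet s).edgeSet = s := by
  rw [edgeSet_fromEdgeSet, sdiff_eq_left]
  exact Set.subset_compl_iff_disjoint_right.1 (hs.trans H.edgeSet_subset_compl_diagSet)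

def leEquivSetEdgeSet (H : SimpleGraph V) : {G : SimpleGraph V // G ≤ H} ≃ Set H.edgeSet :=
  Equiv.trans (β := 𝒫 H.edgeSet)
    { toFun G := ⟨G.1.edgeSet, edgeSet_mono G.2⟩
      invFun s := ⟨fromEdgeSet s, by
        rw [← edgeSet_subset_edgeSet, edgeSet_fromEdgeSet_of_subset s.2]; exact s.2⟩
      left_inv G := Subtype.ext (fromEdgeSet_edgeSet G.1)
      right_inv s := Subtype.ext (edgeSet_fromEdgeSet_of_subset s.2) }
    (Equiv.Set.powerset H.edgeSet)

theorem card_le_eq_two_pow [Finite V] (H : SimpleGraph V) :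
    Nat.card {G : SimpleGraph V // G ≤ H} = 2 ^ H.edgeSet.ncard := by
  classical
  have := Fintype.ofFinite V
  rw [Nat.card_congr H.leEquivSetEdgeSet, ← Nat.card_coe_set_eq, Nat.card_eq_fintype_card,
    Fintype.card_set, Nat.card_eq_fintype_card]

theorem card_le_and_add_card_le_and_not [Finite V] (H : SimpleGraph V)
    (P : SimpleGraph V → Prop) :
    Nat.card {G : SimpleGraph V // G ≤ H ∧ P G} +
      Nat.card {G : SimpleGraph V // G ≤ H ∧ ¬ P G} = 2 ^ H.edgeSet.ncard := by
  classical
  have := Fintype.ofFinite V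
  simp only [← card_le_eq_two_pow, Nat.card_eq_fintype_card, Fintype.card_subtype,
    ← Finset.filter_filter]
  exact Finset.card_filter_add_card_filter_not _

theorem disjoint_edgeSet_sym2_iff {G : SimpleGraph V} {A : Set V} :
    Disjoint G.edgeSet A.sym2 ↔ ∀ a ∈ A, ∀ b ∈ A, ¬ G.Adj a b := by
  refine ⟨fun h a ha b hb hab => Set.disjoint_left.1 h (show s(a, b) ∈ G.edgeSet from hab)
    ⟨ha, hb⟩, fun h => Set.disjoint_left.2 fun e he heA => ?_⟩
  induction e using Sym2.ind with
  | h a b => exact h a heA.1 b heA.2 he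

theorem card_le_indep_mul_two_pow [Finite V] (H : SimpleGraph V) (A : Set V) :
    Nat.card {G : SimpleGraph V // G ≤ H ∧ ∀ a ∈ A, ∀ b ∈ A, ¬ G.Adj a b} *
      2 ^ (H.edgeSet ∩ A.sym2).ncard = 2 ^ H.edgeSet.ncard := by
  have hiff (G : SimpleGraph V) :
      G ≤ H.deleteEdges A.sym2 ↔ G ≤ H ∧ ∀ a ∈ A, ∀ b ∈ A, ¬ G.Adj a b := by
    rw [← edgeSet_subset_edgeSet, edgeSet_deleteEdges, Set.subset_sdiff,
      edgeSet_subset_edgeSet, disjoint_edgeSet_sym2_iff]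
  rw [← Nat.card_congr (Equiv.subtypeEquivRight hiff), card_le_eq_two_pow,
    edgeSet_deleteEdges, ← pow_add, add_comm,
    Set.ncard_inter_add_ncard_sdiff_eq_ncard _ _ (Set.toFinite _)]

end SimpleGraph

theorem Finset.sum_powerset_pow_card_le_exp {ι : Type*} (s : Finset ι) {x : ℝ} (hx : 0 ≤ x) :
    ∑ t ∈ s.powerset, x ^ t.card ≤ Real.exp (s.card * x) := by
  simpa only [Finset.prod_one_add, Finset.prod_const, Finset.sum_const, nsmul_eq_mul] using
    Real.prod_one_add_le_exp_sum s fun _ => hx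

theorem Finset.sum_powerset_inv_pow_card_le_exp_one {ι : Type*} (s : Finset ι) {c : ℝ}
    (hs : (s.card : ℝ) ≤ c) : ∑ t ∈ s.powerset, c⁻¹ ^ t.card ≤ Real.exp 1 := by
  have hc : 0 ≤ c := (Nat.cast_nonneg _).trans hs
  refine (s.sum_powerset_pow_card_le_exp (inv_nonneg.2 hc)).trans (Real.exp_le_exp.2 ?_)
  rcases hc.eq_or_lt with rfl | hc
  · simp
  · rwa [← div_eq_mul_inv, div_le_one hc]

theorem lt_two_pow_of_logb_lt {a b k m e : ℕ} (hb : 1 ≤ b) (hm : 1 ≤ m)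
    (h : 2 * (a * k * Real.logb 2 b + b * Real.logb 2 m) < e) :
    (b ^ (2 * k)) ^ a * (m ^ 2) ^ b < 2 ^ e := by
  have hb' : (0 : ℝ) < b := by exact_mod_cast hb
  have hm' : (0 : ℝ) < m := by exact_mod_cast hm
  have hlog : Real.logb 2 (((b ^ (2 * k)) ^ a * (m ^ 2) ^ b : ℕ) : ℝ) =
      2 * (a * k * Real.logb 2 b + b * Real.logb 2 m) := by
    push_cast
    rw [Real.logb_mul (by positivity) (by positivity), Real.logb_pow, Real.logb_pow,
      Real.logb_pow, Real.logb_pow]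
    push_cast
    ring
  rw [← hlog, Real.logb_lt_iff_lt_rpow one_lt_two (by positivity), Real.rpow_natCast] at h
  exact_mod_cast h

section Kneser

open Finset

def verticesWithin {n : ℕ} (k : ℕ) (B : Finset (Fin n)) :
    Finset {A : Finset (Fin n) // A.card = k} :=
  {F | F.1 ⊆ B}

theorem card_verticesWithin_le {n k : ℕ} (B : Finset (Fin n)) :
    #(verticesWithin k B) ≤ #B ^ k :=
  calc #(verticesWithin k B)
      ≤ #(B.powersetCard k) := card_le_card_of_injOn Subtype.val
        (fun F hF => mem_powersetCard.2 ⟨(mem_filter.1 hF).2, F.2⟩) Subtype.val_injective.injOn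
    _ = (#B).choose k := card_powersetCard k B
    _ ≤ #B ^ k := Nat.choose_le_pow _ _

theorem numDisjPairs_eq_ncard {n k : ℕ} (𝒜 : Finset {A : Finset (Fin n) // A.card = k}) :
    numDisjPairs 𝒜 = ((kneserGraph n k).edgeSet ∩ (𝒜 : Set _).sym2).ncard := by
  unfold numDisjPairs
  congr 1
  ext e
  induction e using Sym2.ind with
  | h F F' =>
    simp only [Set.mem_ofPred_eq, Set.mem_inter_iff, SimpleGraph.mem_edgeSet,
      Set.mk_mem_sym2_iff, mem_coe, kneserGraph, Sym2.eq_iff]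
    constructor
    · rintro ⟨G, hG, G', hG', hne, hdisj, ⟨rfl, rfl⟩ | ⟨rfl, rfl⟩⟩
      · exact ⟨⟨hne, hdisj⟩, hG, hG'⟩
      · exact ⟨⟨hne.symm, hdisj.symm⟩, hG', hG⟩
    · rintro ⟨⟨hne, hdisj⟩, hF, hF'⟩
      exact ⟨F, hF, F', hF', hne, hdisj, Or.inl ⟨rfl, rfl⟩⟩

def IndepFamiliesSparse (n k : ℕ) (G : SimpleGraph {A : Finset (Fin n) // A.card = k}) : Prop :=
  ∀ b : ℕ, 1 ≤ b → b ≤ n →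
    ∀ B : Finset (Fin n), B.card = b →
      ∀ 𝒜 : Finset {A : Finset (Fin n) // A.card = k},
        (∀ F ∈ 𝒜, F.1 ⊆ B) →
        (∀ F ∈ 𝒜, ∀ F' ∈ 𝒜, ¬ G.Adj F F') →
        (numDisjPairs 𝒜 : ℝ) ≤
          2 * ((𝒜.card : ℝ) * (k : ℝ) * Real.logb 2 b + (b : ℝ) * Real.logb 2 n)

/-- `2 ^ (-2 (a k log₂ b + b log₂ n))`: a family of `a` sets inside a `b`-set that violates the
bound is independent with at most this probability. -/
noncomputable def violationWeight (n k b a : ℕ) : ℝ :=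
  ((b : ℝ) ^ (2 * k))⁻¹ ^ a * ((n : ℝ) ^ 2)⁻¹ ^ b

theorem exists_violating_of_not_indepFamiliesSparse {n k : ℕ}
    {G : SimpleGraph {A : Finset (Fin n) // A.card = k}} (h : ¬ IndepFamiliesSparse n k G) :
    ∃ B : Finset (Fin n), B.Nonempty ∧ ∃ 𝒜 ⊆ verticesWithin k B,
      (#B ^ (2 * k)) ^ #𝒜 * (n ^ 2) ^ #B < 2 ^ numDisjPairs 𝒜 ∧
        ∀ F ∈ 𝒜, ∀ F' ∈ 𝒜, ¬ G.Adj F F' := by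
  simp only [IndepFamiliesSparse, not_forall, not_le] at h
  obtain ⟨_, hb, hbn, B, rfl, 𝒜, h𝒜B, hind, hlt⟩ := h
  exact ⟨B, card_pos.1 hb, 𝒜, fun F hF => mem_filter.2 ⟨mem_univ _, h𝒜B F hF⟩,
    lt_two_pow_of_logb_lt hb (hb.trans hbn) hlt, hind⟩

theorem card_indep_le_violationWeight {n k b : ℕ} (hn : 0 < n) (hb : 0 < b)
    {𝒜 : Finset {A : Finset (Fin n) // A.card = k}}
    (h𝒜 : (b ^ (2 * k)) ^ #𝒜 * (n ^ 2) ^ b < 2 ^ numDisjPairs 𝒜) :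
    (Nat.card {G // G ≤ kneserGraph n k ∧ ∀ F ∈ 𝒜, ∀ F' ∈ 𝒜, ¬ G.Adj F F'} : ℝ) ≤
      2 ^ (kneserGraph n k).edgeSet.ncard * violationWeight n k b #𝒜 := by
  rw [numDisjPairs_eq_ncard] at h𝒜
  have hcount : Nat.card {G // G ≤ kneserGraph n k ∧ ∀ F ∈ 𝒜, ∀ F' ∈ 𝒜, ¬ G.Adj F F'} *
      ((b ^ (2 * k)) ^ #𝒜 * (n ^ 2) ^ b) ≤ 2 ^ (kneserGraph n k).edgeSet.ncard :=
    (kneserGraph n k).card_le_indep_mul_two_pow 𝒜 ▸ Nat.mul_le_mul_left _ h𝒜.le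
  rw [violationWeight, inv_pow, inv_pow, ← mul_inv, ← div_eq_mul_inv,
    le_div_iff₀ (by positivity)]
  exact_mod_cast hcount

theorem card_not_indepFamiliesSparse_le (n k : ℕ) :
    (Nat.card {G // G ≤ kneserGraph n k ∧ ¬ IndepFamiliesSparse n k G} : ℝ) ≤
      2 ^ (kneserGraph n k).edgeSet.ncard * ∑ B : Finset (Fin n) with B.Nonempty,
        ∑ 𝒜 ∈ (verticesWithin k B).powerset, violationWeight n k #B #𝒜 := by
  classical
  set H := kneserGraph n k
  let indep (𝒜 : Finset {A : Finset (Fin n) // A.card = k}) : Finset (SimpleGraph _) :=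
    {G | G ≤ H ∧ ∀ F ∈ 𝒜, ∀ F' ∈ 𝒜, ¬ G.Adj F F'}
  let violating (B : Finset (Fin n)) := (verticesWithin k B).powerset.filter
    fun 𝒜 => (#B ^ (2 * k)) ^ #𝒜 * (n ^ 2) ^ #B < 2 ^ numDisjPairs 𝒜
  have hcover : ({G | G ≤ H ∧ ¬ IndepFamiliesSparse n k G} : Finset _) ⊆
      ({B | B.Nonempty} : Finset _).biUnion fun B => (violating B).biUnion indep := by
    intro G hG
    obtain ⟨hGH, hG⟩ := (mem_filter.1 hG).2
    obtain ⟨B, hB, 𝒜, h𝒜B, hlt, hind⟩ := exists_violating_of_not_indepFamiliesSparse hG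
    exact mem_biUnion.2 ⟨B, mem_filter.2 ⟨mem_univ _, hB⟩, mem_biUnion.2
      ⟨𝒜, mem_filter.2 ⟨mem_powerset.2 h𝒜B, hlt⟩, mem_filter.2 ⟨mem_univ _, hGH, hind⟩⟩⟩
  calc (Nat.card {G // G ≤ H ∧ ¬ IndepFamiliesSparse n k G} : ℝ)
      = #({G | G ≤ H ∧ ¬ IndepFamiliesSparse n k G} : Finset _) := by
        rw [Nat.card_eq_fintype_card, Fintype.card_subtype]
    _ ≤ ∑ B : Finset (Fin n) with B.Nonempty, ∑ 𝒜 ∈ violating B, (#(indep 𝒜) : ℝ) := by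
        exact_mod_cast (card_le_card hcover).trans
          (card_biUnion_le.trans (sum_le_sum fun B _ => card_biUnion_le))
    _ ≤ ∑ B : Finset (Fin n) with B.Nonempty, ∑ 𝒜 ∈ violating B,
          2 ^ H.edgeSet.ncard * violationWeight n k #B #𝒜 := by
        gcongr with B hB 𝒜 h𝒜
        have hB : B.Nonempty := (mem_filter.1 hB).2
        rw [← Fintype.card_subtype, ← Nat.card_eq_fintype_card]
        exact card_indep_le_violationWeight hB.choose.pos hB.card_pos (mem_filter.1 h𝒜).2
    _ ≤ ∑ B : Finset (Fin n) with B.Nonempty, ∑ 𝒜 ∈ (verticesWithin k B).powerset,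
          2 ^ H.edgeSet.ncard * violationWeight n k #B #𝒜 := by
        gcongr with B _
        · exact fun _ _ _ => mul_nonneg (by positivity) (by unfold violationWeight; positivity)
        · exact filter_subset _ _
    _ = _ := by simp only [mul_sum]

theorem sum_violationWeight_le (n k : ℕ) :
    ∑ B : Finset (Fin n) with B.Nonempty, ∑ 𝒜 ∈ (verticesWithin k B).powerset,
        violationWeight n k #B #𝒜 ≤ Real.exp 1 ^ 2 / n := by
  have hinner (B : Finset (Fin n)) (hB : B.Nonempty) :
      ∑ 𝒜 ∈ (verticesWithin k B).powerset, ((#B : ℝ) ^ (2 * k))⁻¹ ^ #𝒜 ≤ Real.exp 1 := by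
    refine sum_powerset_inv_pow_card_le_exp_one _ ?_
    exact_mod_cast (card_verticesWithin_le B).trans
      (Nat.pow_le_pow_right hB.card_pos (by omega))
  have houter (B : Finset (Fin n)) (hB : B.Nonempty) :
      ((n : ℝ) ^ 2)⁻¹ ^ #B ≤ (n : ℝ)⁻¹ * (n : ℝ)⁻¹ ^ #B := by
    rw [← inv_pow, ← pow_mul, mul_comm, pow_mul, sq]
    gcongr
    exact pow_le_of_le_one (by positivity) (Nat.cast_inv_le_one n) hB.card_pos.ne'
  have hall : ∑ B : Finset (Fin n), (n : ℝ)⁻¹ ^ #B ≤ Real.exp 1 := by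
    rw [← powerset_univ]
    exact sum_powerset_inv_pow_card_le_exp_one _ (by simp)
  calc _ = ∑ B : Finset (Fin n) with B.Nonempty, ((n : ℝ) ^ 2)⁻¹ ^ #B *
          ∑ 𝒜 ∈ (verticesWithin k B).powerset, ((#B : ℝ) ^ (2 * k))⁻¹ ^ #𝒜 := by
        simp only [violationWeight, mul_sum, mul_comm]
    _ ≤ ∑ B : Finset (Fin n) with B.Nonempty, (n : ℝ)⁻¹ * (n : ℝ)⁻¹ ^ #B * Real.exp 1 := by
        gcongr with B hB
        · exact houter B (mem_filter.1 hB).2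
        · exact hinner B (mem_filter.1 hB).2
    _ ≤ ∑ B : Finset (Fin n), (n : ℝ)⁻¹ * (n : ℝ)⁻¹ ^ #B * Real.exp 1 :=
        sum_le_sum_of_subset_of_nonneg (filter_subset _ _) fun _ _ _ => by positivity
    _ ≤ Real.exp 1 ^ 2 / n := by
        rw [← sum_mul, ← mul_sum, sq, div_eq_inv_mul, ← mul_assoc]
        gcongr

theorem card_not_indepFamiliesSparse_div_le (n k : ℕ) :
    (Nat.card {G // G ≤ kneserGraph n k ∧ ¬ IndepFamiliesSparse n k G} : ℝ) /
      2 ^ (kneserGraph n k).edgeSet.ncard ≤ Real.exp 1 ^ 2 / n := by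
  rw [div_le_iff₀ (by positivity), mul_comm]
  exact (card_not_indepFamiliesSparse_le n k).trans
    (mul_le_mul_of_nonneg_left (sum_violationWeight_le n k) (by positivity))

theorem kneserFraction_eq_one_sub (k : ℕ → ℕ)
    (P : (n : ℕ) → SimpleGraph {A : Finset (Fin n) // A.card = k n} → Prop) (n : ℕ) :
    kneserFraction k P n = 1 - (Nat.card {G // G ≤ kneserGraph n (k n) ∧ ¬ P n G} : ℝ) /
      2 ^ (kneserGraph n (k n)).edgeSet.ncard := by
  have h := (kneserGraph n (k n)).card_le_and_add_card_le_and_not (P n)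
  rw [kneserFraction, Nat.card_coe_set_eq, eq_sub_iff_add_eq, ← add_div,
    div_eq_one_iff_eq (by positivity)]
  exact_mod_cast h

end Kneser

theorem independent_family_disjoint_pairs_bound_general (k : ℕ → ℕ) :
    kneserAAS k (fun n G =>
      ∀ b : ℕ, 1 ≤ b → b ≤ n →
        ∀ B : Finset (Fin n), B.card = b →
          ∀ 𝒜 : Finset {A : Finset (Fin n) // A.card = k n},
            (∀ F ∈ 𝒜, F.1 ⊆ B) →
            (∀ F ∈ 𝒜, ∀ F' ∈ 𝒜, ¬ G.Adj F F') →
            (numDisjPairs 𝒜 : ℝ) ≤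
              2 * ((𝒜.card : ℝ) * (k n : ℝ) * Real.logb 2 b +
                (b : ℝ) * Real.logb 2 n)) := by
  change Tendsto (kneserFraction k fun n => IndepFamiliesSparse n (k n)) atTop (nhds 1)
  have hbad : Tendsto (fun n => (Nat.card {G // G ≤ kneserGraph n (k n) ∧
      ¬ IndepFamiliesSparse n (k n) G} : ℝ) / 2 ^ (kneserGraph n (k n)).edgeSet.ncard)
      atTop (nhds 0) :=
    squeeze_zero (fun _ => by positivity) (fun n => card_not_indepFamiliesSparse_div_le n (k n))
      (tendsto_const_div_atTop_nhds_zero_nat _)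
  rw [funext (kneserFraction_eq_one_sub k _)]
  simpa only [sub_zero] using (tendsto_const_nhds (x := (1 : ℝ))).sub hbad

/-- A.a.s., every family `𝒜` of `k(n)`-subsets of a `b`-element subset `B ⊆ [n]` that is
independent in `KG_{n,k(n)}(1/2)` satisfies `e(𝒜) ≤ 2(|𝒜|·k(n)·log₂ b + b·log₂ n)`. -/
theorem independent_family_disjoint_pairs_bound (k : ℕ → ℕ)
    (hk : ∀ᶠ n in atTop, 2 ≤ k n ∧ 2 * k n ≤ n) :
    kneserAAS k (fun n G =>
      ∀ b : ℕ, 1 ≤ b → b ≤ n →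
        ∀ B : Finset (Fin n), B.card = b →
          ∀ 𝒜 : Finset {A : Finset (Fin n) // A.card = k n},
            (∀ F ∈ 𝒜, F.1 ⊆ B) →
            (∀ F ∈ 𝒜, ∀ F' ∈ 𝒜, ¬ G.Adj F F') →
            (numDisjPairs 𝒜 : ℝ) ≤
              2 * ((𝒜.card : ℝ) * (k n : ℝ) * Real.logb 2 b +
                (b : ℝ) * Real.logb 2 n)) :=
  independent_family_disjoint_pairs_bound_general k
end

section
/- Let n ≥ rk with r ≥ 2, k ≥ 1, and let G be a spanning sub-hypergraph of the Kneser hypergraph KG^r_{n,k}. Suppose there exists a family A = (A₁, …, A_l) of l pairwise disjoint r-element subsets of [n] that is empty in G. Then χ(G) ≤ ⌈(n − l)/(r − 1)⌉, i.e., there is a coloring of all k-element subsets of [n] with ⌈(n − l)/(r − 1)⌉ colors such that no edge of G is monochromatic. -/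
open Filter

/-- The edge set of the Kneser hypergraph `KG^r_{n,k}`: edges are `r`-element
collections of pairwise disjoint `k`-element subsets of `[n]`. -/
def kneserHyperEdges (n k r : ℕ) : Set (Finset {A : Finset (Fin n) // A.card = k}) :=
  {e | e.card = r ∧ ∀ A ∈ e, ∀ B ∈ e, A ≠ B → Disjoint A.1 B.1}

/-- The family `A = (A₁, …, A_l)` of pairwise disjoint `r`-sets is *empty* in the
sub-hypergraph with edge set `G`: for each `i`, no edge of `G` consists entirely of
`k`-sets lying inside `A₁ ∪ … ∪ A_i` and meeting `A_i`. -/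
def emptyFamilyIn {n k : ℕ} (G : Set (Finset {A : Finset (Fin n) // A.card = k}))
    {l : ℕ} (A : Fin l → Finset (Fin n)) : Prop :=
  ∀ i : Fin l, ∀ e ∈ G,
    ¬ (∀ v ∈ e, v.1 ⊆ (Finset.Iic i).biUnion A ∧ (v.1 ∩ A i).Nonempty)

/-!
Colour the `k`-sets lying in `U = A₁ ∪ … ∪ A_l` by the largest `i` with `S ∩ A_i ≠ ∅`:
the class of colour `i` is exactly the vertex set `V_i(A)`, so emptiness of the family says it
contains no edge. Split the remaining `n − lr` points into `⌈(n − lr)/(r − 1)⌉` blocks of at most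
`r − 1` points and colour a `k`-set meeting the complement of `U` by a block it meets; an edge
in such a class would consist of `r` disjoint sets all meeting one block of fewer than `r` points.
Altogether this uses `l + ⌈(n − lr)/(r − 1)⌉ = ⌈(n − l)/(r − 1)⌉` colours.
-/

open Finset

theorem exists_proper_coloring_of_cover {V ι : Type*} {G : Set (Finset V)} (hG : ∅ ∉ G)
    (P : ι → V → Prop) (hcover : ∀ v, ∃ i, P i v) (hindep : ∀ i, ∀ e ∈ G, ¬ ∀ v ∈ e, P i v) :
    ∃ c : V → ι, ∀ e ∈ G, ∃ v ∈ e, ∃ w ∈ e, c v ≠ c w := by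
  choose c hc using hcover
  refine ⟨c, fun e he => ?_⟩
  obtain ⟨v, hv⟩ := nonempty_iff_ne_empty.2 (ne_of_mem_of_not_mem he hG)
  by_contra! hmono
  exact hindep (c v) e he fun w hw => hmono v hv w hw ▸ hc w

theorem Finset.exists_cover_of_card_le_mul {α : Type*} [DecidableEq α] {d : ℕ} :
    ∀ {q : ℕ} {W : Finset α}, #W ≤ q * d →
      ∃ T : Fin q → Finset α, (∀ b, #(T b) ≤ d) ∧ ∀ x ∈ W, ∃ b, x ∈ T b
  | 0, W, hW => ⟨Fin.elim0, fun b => b.elim0, fun x hx => by simp_all⟩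
  | q + 1, W, hW => by
    obtain ⟨s, hsW, hs⟩ := W.exists_subset_card_eq (min_le_right d #W)
    obtain ⟨T, hTd, hT⟩ := exists_cover_of_card_le_mul (d := d) (q := q) (W := W \ s)
      (by rw [card_sdiff_of_subset hsW, hs]; rw [Nat.add_mul, one_mul] at hW; omega)
    refine ⟨Fin.cons s T, Fin.cases (by simp [hs]) (by simpa using hTd), fun x hx => ?_⟩
    by_cases hxs : x ∈ s
    · exact ⟨0, hxs⟩
    · obtain ⟨b, hb⟩ := hT x (mem_sdiff.2 ⟨hx, hxs⟩)
      exact ⟨b.succ, hb⟩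

theorem Finset.exists_subset_biUnion_Iic_inter_nonempty {ι α : Type*} [Fintype ι] [LinearOrder ι]
    [LocallyFiniteOrderBot ι] [DecidableEq α] {A : ι → Finset α} {S : Finset α}
    (hS : S.Nonempty) (hSA : S ⊆ univ.biUnion A) :
    ∃ i, S ⊆ (Iic i).biUnion A ∧ (S ∩ A i).Nonempty := by
  classical
  set I := univ.filter fun j => (S ∩ A j).Nonempty
  have hmeet : ∀ x ∈ S, ∃ j ∈ I, x ∈ A j := by
    intro x hx
    obtain ⟨j, -, hj⟩ := mem_biUnion.1 (hSA hx)
    exact ⟨j, mem_filter.2 ⟨mem_univ _, x, mem_inter.2 ⟨hx, hj⟩⟩, hj⟩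
  obtain ⟨x, hx⟩ := hS
  obtain ⟨j, hj, -⟩ := hmeet x hx
  refine ⟨I.max' ⟨j, hj⟩, fun y hy => ?_, (mem_filter.1 (I.max'_mem _)).2⟩
  obtain ⟨j', hj', hyj'⟩ := hmeet y hy
  exact mem_biUnion.2 ⟨j', mem_Iic.2 (I.le_max' j' hj'), hyj'⟩

theorem le_card_of_mem_kneserHyperEdges {n k r : ℕ} {e} (he : e ∈ kneserHyperEdges n k r)
    {T : Finset (Fin n)} (hT : ∀ v ∈ e, (v.1 ∩ T).Nonempty) : r ≤ #T := by
  obtain ⟨rfl, hdisj⟩ := he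
  calc #e ≤ #(e.biUnion fun v => v.1 ∩ T) :=
        card_le_card_biUnion (fun v hv w hw hvw =>
          (hdisj v hv w hw hvw).mono inter_subset_left inter_subset_left) hT
    _ ≤ #T := card_le_card (biUnion_subset.2 fun _ _ => inter_subset_right)

section ColorCount

variable {n l r : ℕ}

theorem sub_le_ceil_sub_div_mul (hr : 2 ≤ r) :
    (n : ℝ) - l ≤ ⌈((n : ℝ) - l) / ((r : ℝ) - 1)⌉₊ * ((r : ℝ) - 1) := by
  have hr1 : (0 : ℝ) < r - 1 := sub_pos.2 (by exact_mod_cast hr)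
  exact (div_le_iff₀ hr1).1 (Nat.le_ceil _)

theorem le_ceil_sub_div (hr : 2 ≤ r) (hlr : l * r ≤ n) :
    l ≤ ⌈((n : ℝ) - l) / ((r : ℝ) - 1)⌉₊ := by
  have hr1 : (0 : ℝ) < r - 1 := sub_pos.2 (by exact_mod_cast hr)
  have hlr' : (l : ℝ) * r ≤ n := by exact_mod_cast hlr
  refine Nat.cast_le.1 (le_of_mul_le_mul_right ?_ hr1)
  linarith [sub_le_ceil_sub_div_mul (n := n) (l := l) hr]

theorem sub_mul_le_ceil_sub_div_sub_mul (hr : 2 ≤ r) (hlr : l * r ≤ n) :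
    n - l * r ≤ (⌈((n : ℝ) - l) / ((r : ℝ) - 1)⌉₊ - l) * (r - 1) := by
  have key := sub_le_ceil_sub_div_mul (n := n) (l := l) hr
  rw [← Nat.cast_le (α := ℝ), Nat.cast_sub hlr, Nat.cast_mul, Nat.cast_mul,
    Nat.cast_sub (le_ceil_sub_div hr hlr), Nat.cast_sub (by omega : 1 ≤ r), Nat.cast_one]
  linarith

end ColorCount

theorem chromatic_bound_of_empty_family_general (n k r l : ℕ) (hk : 1 ≤ k) (hr : 2 ≤ r)
    (G : Set (Finset {A : Finset (Fin n) // A.card = k}))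
    (hG : G ⊆ kneserHyperEdges n k r)
    (A : Fin l → Finset (Fin n))
    (hcard : ∀ i, (A i).card = r)
    (hdisj : ∀ i j, i ≠ j → Disjoint (A i) (A j))
    (hempty : emptyFamilyIn G A) :
    ∃ c : {S : Finset (Fin n) // S.card = k} → Fin ⌈((n : ℝ) - l) / ((r : ℝ) - 1)⌉₊,
      ∀ e ∈ G, ∃ v ∈ e, ∃ w ∈ e, c v ≠ c w := by
  set t := ⌈((n : ℝ) - l) / ((r : ℝ) - 1)⌉₊
  set U := univ.biUnion A
  have hU : #U = l * r := by
    rw [card_biUnion fun i _ j _ hij => hdisj i j hij]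
    simp [hcard]
  have hlr : l * r ≤ n := hU ▸ (card_le_univ U).trans_eq (Fintype.card_fin n)
  obtain ⟨T, hTcard, hTcover⟩ := exists_cover_of_card_le_mul (W := Uᶜ) (q := t - l) (d := r - 1)
    (by rw [card_compl, hU, Fintype.card_fin]; exact sub_mul_le_ceil_sub_div_sub_mul hr hlr)
  let P : Fin l ⊕ Fin (t - l) → {S : Finset (Fin n) // S.card = k} → Prop :=
    Sum.elim (fun i S => S.1 ⊆ (Iic i).biUnion A ∧ (S.1 ∩ A i).Nonempty)
      (fun b S => (S.1 ∩ T b).Nonempty)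
  have hcover : ∀ S, ∃ j, P j S := by
    intro S
    by_cases hSU : S.1 ⊆ U
    · obtain ⟨i, hi⟩ := exists_subset_biUnion_Iic_inter_nonempty (card_pos.1 (by omega)) hSU
      exact ⟨.inl i, hi⟩
    · obtain ⟨x, hxS, hxU⟩ := not_subset.1 hSU
      obtain ⟨b, hb⟩ := hTcover x (mem_compl.2 hxU)
      exact ⟨.inr b, x, mem_inter.2 ⟨hxS, hb⟩⟩
  have hindep : ∀ j, ∀ e ∈ G, ¬ ∀ v ∈ e, P j v
    | .inl i => hempty i
    | .inr b => fun e he h => by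
      have := le_card_of_mem_kneserHyperEdges (hG he) h
      have := hTcard b
      omega
  have hG0 : ∅ ∉ G := fun h => by
    have := (hG h).1
    rw [card_empty] at this
    omega
  obtain ⟨c, hc⟩ := exists_proper_coloring_of_cover hG0 P hcover hindep
  have hinj := (Fin.castLE_injective (Nat.add_sub_of_le (le_ceil_sub_div hr hlr)).le).comp
    finSumFinEquiv.injective
  exact ⟨_ ∘ finSumFinEquiv ∘ c, fun e he => (hc e he).imp fun v ⟨hv, w, hw, hvw⟩ =>
    ⟨hv, w, hw, hinj.ne hvw⟩⟩

/-- If a spanning sub-hypergraph `G` of `KG^r_{n,k}` admits an empty family of `l`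
pairwise disjoint `r`-sets, then `χ(G) ≤ ⌈(n − l)/(r − 1)⌉`. -/
theorem chromatic_bound_of_empty_family (n k r l : ℕ) (hk : 1 ≤ k) (hr : 2 ≤ r)
    (hn : r * k ≤ n)
    (G : Set (Finset {A : Finset (Fin n) // A.card = k}))
    (hG : G ⊆ kneserHyperEdges n k r)
    (A : Fin l → Finset (Fin n))
    (hcard : ∀ i, (A i).card = r)
    (hdisj : ∀ i j, i ≠ j → Disjoint (A i) (A j))
    (hempty : emptyFamilyIn G A) :
    ∃ c : {S : Finset (Fin n) // S.card = k} → Fin ⌈((n : ℝ) - l) / ((r : ℝ) - 1)⌉₊,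
      ∀ e ∈ G, ∃ v ∈ e, ∃ w ∈ e, c v ≠ c w :=
  chromatic_bound_of_empty_family_general n k r l hk hr G hG A hcard hdisj hempty
end

section
/- For all integers k ≥ 1 and n ≥ 2k, there exists a coloring of the k-element subsets of [n] with n − 2k + 1 colors such that the number of monochromatic edges of the Kneser graph KG_{n,k} (unordered pairs of disjoint k-sets receiving the same color) is at most (1/2)·C(2k,k). -/
/-- For all `k ≥ 1` and `n ≥ 2k` there is a coloring of the `k`-subsets of `[n]` with
`n − 2k + 1` colors having at most `(1/2)·C(2k,k)` monochromatic edges of the Kneser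
graph `KG_{n,k}` (unordered pairs of disjoint `k`-sets of the same color). -/
theorem coloring_with_few_monochromatic_edges (k n : ℕ) (hk : 1 ≤ k) (hn : 2 * k ≤ n) :
    ∃ c : {A : Finset (Fin n) // A.card = k} → Fin (n - 2 * k + 1),
      (({p : Sym2 {A : Finset (Fin n) // A.card = k} |
          ∃ F₁ F₂ : {A : Finset (Fin n) // A.card = k},
            F₁ ≠ F₂ ∧ Disjoint F₁.1 F₂.1 ∧ c F₁ = c F₂ ∧ p = s(F₁, F₂)}.ncard : ℝ)) ≤
        (1 / 2 : ℝ) * ((2 * k).choose k : ℝ) := by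
  classical
  set V := {A : Finset (Fin n) // A.card = k} with hV
  set m := n - 2 * k with hm
  have hmn : m < n := by omega
  set S : Finset (Fin n) := Finset.Ici (⟨m, hmn⟩ : Fin n) with hSdef
  have hScard : S.card = 2 * k := by
    rw [hSdef, Fin.card_Ici]
    show n - m = 2 * k
    omega
  have hSmem : ∀ x : Fin n, x ∈ S ↔ m ≤ x.val := by
    intro x; simp [hSdef, Fin.le_def]
  have hne : ∀ A : V, A.1.Nonempty := by
    intro A
    have := A.2
    rw [← Finset.card_pos, this]; omega
  refine ⟨fun A => ⟨min (A.1.min' (hne A)).val m, by omega⟩, ?_⟩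
  have key : ∀ F₁ F₂ : V, F₁ ≠ F₂ → Disjoint F₁.1 F₂.1 →
      (⟨min (F₁.1.min' (hne F₁)).val m, by omega⟩ : Fin (n - 2*k+1)) =
      (⟨min (F₂.1.min' (hne F₂)).val m, by omega⟩ : Fin (n - 2*k+1)) →
      F₁.1 ⊆ S ∧ F₂.1 = S \ F₁.1 := by
    intro F₁ F₂ hneq hdisj hc
    have hc' : min (F₁.1.min' (hne F₁)).val m = min (F₂.1.min' (hne F₂)).val m :=
      congrArg Fin.val hc
    have hab : (F₁.1.min' (hne F₁)).val ≠ (F₂.1.min' (hne F₂)).val := by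
      intro h
      have heq : F₁.1.min' (hne F₁) = F₂.1.min' (hne F₂) := Fin.ext h
      have h1 : F₁.1.min' (hne F₁) ∈ F₁.1 := Finset.min'_mem _ _
      have h2 : F₁.1.min' (hne F₁) ∈ F₂.1 := heq ▸ Finset.min'_mem _ _
      exact (Finset.disjoint_left.mp hdisj h1) h2
    have hm1 : m ≤ (F₁.1.min' (hne F₁)).val := by omega
    have hm2 : m ≤ (F₂.1.min' (hne F₂)).val := by omega
    have hsub1 : F₁.1 ⊆ S := by
      intro x hx
      rw [hSmem]
      exact le_trans hm1 (Finset.min'_le _ _ hx)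
    have hsub2 : F₂.1 ⊆ S := by
      intro x hx
      rw [hSmem]
      exact le_trans hm2 (Finset.min'_le _ _ hx)
    refine ⟨hsub1, ?_⟩
    have hsub : F₂.1 ⊆ S \ F₁.1 := by
      intro x hx
      rw [Finset.mem_sdiff]
      exact ⟨hsub2 hx, fun hx1 => (Finset.disjoint_left.mp hdisj hx1) hx⟩
    refine Finset.eq_of_subset_of_card_le hsub ?_
    rw [Finset.card_sdiff_of_subset hsub1, hScard, F₁.2, F₂.2]; omega
  set E : Set (Sym2 V) := {p : Sym2 V |
      ∃ F₁ F₂ : V, F₁ ≠ F₂ ∧ Disjoint F₁.1 F₂.1 ∧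
        (⟨min (F₁.1.min' (hne F₁)).val m, by omega⟩ : Fin (n - 2*k+1)) =
        (⟨min (F₂.1.min' (hne F₂)).val m, by omega⟩ : Fin (n - 2*k+1)) ∧
        p = s(F₁, F₂)} with hE
  show (E.ncard : ℝ) ≤ _
  set f : Sym2 V → Finset (Fin n) := fun p => (Quot.out p).1.1 with hf
  have hrep : ∀ p : Sym2 V, p = s((Quot.out p).1, (Quot.out p).2) := by
    intro p
    conv_lhs => rw [← Quot.out_eq p]
  have hEdesc : ∀ p ∈ E, ∃ (h1 : f p ⊆ S) (h2 : (f p).card = k),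
      p = s(⟨f p, h2⟩, ⟨S \ f p, by rw [Finset.card_sdiff_of_subset h1, hScard, h2]; omega⟩) := by
    intro p hp
    obtain ⟨F₁, F₂, hneq, hdisj, hc, hpeq⟩ := hp
    obtain ⟨h1, h2⟩ := key F₁ F₂ hneq hdisj hc
    subst hpeq
    have hrepp := hrep s(F₁, F₂)
    rw [Sym2.eq_iff] at hrepp
    have hF2sub : F₂.1 ⊆ S := by rw [h2]; exact Finset.sdiff_subset
    have hF1eq : F₁.1 = S \ F₂.1 := by
      rw [h2, Finset.sdiff_sdiff_self_left, Finset.inter_eq_right.mpr h1]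
    rcases hrepp with ⟨ha, hb⟩ | ⟨ha, hb⟩
    · have hfp : f s(F₁, F₂) = F₁.1 := congrArg Subtype.val ha.symm
      refine ⟨hfp ▸ h1, hfp ▸ F₁.2, ?_⟩
      rw [Sym2.eq_iff]
      left
      refine ⟨Subtype.ext hfp.symm, Subtype.ext ?_⟩
      show F₂.1 = S \ f s(F₁, F₂)
      rw [hfp, h2]
    · have hfp : f s(F₁, F₂) = F₂.1 := congrArg Subtype.val hb.symm
      refine ⟨hfp ▸ hF2sub, hfp ▸ F₂.2, ?_⟩
      conv_lhs => rw [Sym2.eq_swap]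
      rw [Sym2.eq_iff]
      left
      refine ⟨Subtype.ext hfp.symm, Subtype.ext ?_⟩
      show F₁.1 = S \ f s(F₁, F₂)
      rw [hfp, ← hF1eq]
  have hfinj : Set.InjOn f E := by
    intro p hp q hq hfeq
    obtain ⟨h1p, h2p, hpe⟩ := hEdesc p hp
    obtain ⟨h1q, h2q, hqe⟩ := hEdesc q hq
    rw [hpe, hqe, Sym2.eq_iff]
    left
    refine ⟨Subtype.ext hfeq, Subtype.ext ?_⟩
    show S \ f p = S \ f q
    rw [hfeq]
  set g : Sym2 V → Finset (Fin n) := fun p => S \ f p with hg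
  have hginj : Set.InjOn g E := by
    intro p hp q hq hgeq
    obtain ⟨h1p, h2p, hpe⟩ := hEdesc p hp
    obtain ⟨h1q, h2q, hqe⟩ := hEdesc q hq
    apply hfinj hp hq
    have h : S \ (S \ f p) = S \ (S \ f q) := by
      have : g p = g q := hgeq
      show S \ g p = S \ g q
      rw [this]
    rwa [Finset.sdiff_sdiff_self_left, Finset.sdiff_sdiff_self_left,
      Finset.inter_eq_right.mpr h1p, Finset.inter_eq_right.mpr h1q] at h
  have hdisjim : Disjoint (f '' E) (g '' E) := by
    rw [Set.disjoint_left]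
    rintro F ⟨p, hp, hfp⟩ ⟨q, hq, hgq⟩
    obtain ⟨h1p, h2p, hpe⟩ := hEdesc p hp
    obtain ⟨h1q, h2q, hqe⟩ := hEdesc q hq
    have hfq : f p = S \ f q := by rw [hfp, ← hgq]
    have hpq : p = q := by
      rw [hpe, hqe, Sym2.eq_iff]
      right
      constructor
      · exact Subtype.ext hfq
      · apply Subtype.ext
        show S \ f p = f q
        rw [hfq, Finset.sdiff_sdiff_self_left, Finset.inter_eq_right.mpr h1q]
    rw [hpq] at hfq
    have hd : Disjoint (f q) (S \ f q) := Finset.disjoint_sdiff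
    rw [← hfq] at hd
    have hemp : f q = ∅ := by simpa using hd
    rw [hemp] at h2q
    simp at h2q
    omega
  have hEfin : E.Finite := Set.toFinite E
  have hP : (f '' E ∪ g '' E) ⊆ ↑(S.powersetCard k) := by
    rintro F (⟨p, hp, hfp⟩ | ⟨p, hp, hgp⟩)
    · obtain ⟨h1, h2, _⟩ := hEdesc p hp
      rw [Finset.mem_coe, Finset.mem_powersetCard]
      exact ⟨hfp ▸ h1, hfp ▸ h2⟩
    · obtain ⟨h1, h2, _⟩ := hEdesc p hp
      rw [Finset.mem_coe, Finset.mem_powersetCard]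
      constructor
      · rw [← hgp]; exact Finset.sdiff_subset
      · rw [← hgp]
        show (S \ f p).card = k
        rw [Finset.card_sdiff_of_subset h1, hScard, h2]; omega
  have hcount : E.ncard + E.ncard ≤ (2 * k).choose k := by
    have h1 : (f '' E).ncard = E.ncard := Set.ncard_image_of_injOn hfinj
    have h2 : (g '' E).ncard = E.ncard := Set.ncard_image_of_injOn hginj
    have h3 : (f '' E ∪ g '' E).ncard = (f '' E).ncard + (g '' E).ncard :=
      Set.ncard_union_eq hdisjim (hEfin.image f) (hEfin.image g)
    have h4 : (f '' E ∪ g '' E).ncard ≤ (↑(S.powersetCard k) : Set (Finset (Fin n))).ncard :=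
      Set.ncard_le_ncard hP (Set.toFinite _)
    rw [Set.ncard_coe_finset, Finset.card_powersetCard, hScard] at h4
    omega
  have hcast : (E.ncard : ℝ) + (E.ncard : ℝ) ≤ ((2 * k).choose k : ℝ) := by
    exact_mod_cast hcount
  linarith
end

section
/- Let k ≥ 1 and n = 3k, and partition [n] into the blocks B_i = {3i−2, 3i−1, 3i} for i = 1, …, k. For each i let F_i be the family of all k-element subsets A of [n] with |A ∩ B_i| ≥ 2. Then: (1) each F_i is an intersecting family; (2) a k-element subset A of [n] belongs to no F_i if and only if |A ∩ B_i| = 1 for every i ∈ [k]; and (3) the number of k-element subsets of [n] belonging to no F_i equals exactly 3^k. In particular, [the collection of all k-subsets of [3k]] minus a set of exactly 3^k sets can be covered by k = n − 2k intersecting families. -/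
/-- The `i`-th block `B_i = {3i−2, 3i−1, 3i}` (1-indexed) of the partition of
`[3k]` into `k` consecutive triples, realized inside `Fin (3k)`. -/
def tripleBlock (k : ℕ) (i : Fin k) : Finset (Fin (3 * k)) :=
  Finset.univ.filter fun x => x.1 / 3 = i.1

/-- `F_i`: the family of all `k`-element subsets `A` of `[3k]` with `|A ∩ B_i| ≥ 2`. -/
def blockFamily (k : ℕ) (i : Fin k) : Finset (Finset (Fin (3 * k))) :=
  Finset.univ.filter fun A => A.card = k ∧ 2 ≤ (A ∩ tripleBlock k i).card

namespace BlocksAux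

def emb (k : ℕ) (i : Fin k) (j : Fin 3) : Fin (3 * k) :=
  ⟨3 * i.1 + j.1, by have := i.2; have := j.2; omega⟩

lemma emb_val (k : ℕ) (i : Fin k) (j : Fin 3) : (emb k i j).1 = 3 * i.1 + j.1 := rfl

lemma mem_tripleBlock {k : ℕ} {i : Fin k} {x : Fin (3 * k)} :
    x ∈ tripleBlock k i ↔ x.1 / 3 = i.1 := by
  simp [tripleBlock]

lemma emb_div (k : ℕ) (i : Fin k) (j : Fin 3) : (emb k i j).1 / 3 = i.1 := by
  have := j.2; rw [emb_val]; omega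

lemma emb_inj {k : ℕ} {i i' : Fin k} {j j' : Fin 3}
    (h : emb k i j = emb k i' j') : i = i' ∧ j = j' := by
  have hv : 3 * i.1 + j.1 = 3 * i'.1 + j'.1 := congrArg Fin.val h
  have := j.2; have := j'.2
  exact ⟨Fin.ext (by omega), Fin.ext (by omega)⟩

lemma tripleBlock_eq_image (k : ℕ) (i : Fin k) :
    tripleBlock k i = Finset.image (emb k i) Finset.univ := by
  ext x
  simp only [mem_tripleBlock, Finset.mem_image, Finset.mem_univ, true_and]
  constructor
  · intro h
    refine ⟨⟨x.1 % 3, by omega⟩, ?_⟩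
    apply Fin.ext
    rw [emb_val]
    simp only []
    omega
  · rintro ⟨j, rfl⟩
    exact emb_div k i j

lemma card_tripleBlock (k : ℕ) (i : Fin k) : (tripleBlock k i).card = 3 := by
  rw [tripleBlock_eq_image, Finset.card_image_of_injective _ ?_]
  · simp
  · intro a b hab
    exact (emb_inj hab).2

lemma sum_card_inter (k : ℕ) (A : Finset (Fin (3 * k))) :
    ∑ i : Fin k, (A ∩ tripleBlock k i).card = A.card := by
  have h := Finset.card_eq_sum_card_fiberwise
    (f := fun x : Fin (3 * k) => (⟨x.1 / 3, by have := x.2; omega⟩ : Fin k))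
    (s := A) (t := Finset.univ) (fun x _ => Finset.mem_univ _)
  rw [h]
  refine Finset.sum_congr rfl fun i _ => ?_
  congr 1
  ext x
  simp only [Finset.mem_inter, mem_tripleBlock, Finset.mem_filter, Fin.ext_iff]

lemma mem_blockFamily {k : ℕ} {i : Fin k} {A : Finset (Fin (3 * k))} :
    A ∈ blockFamily k i ↔ A.card = k ∧ 2 ≤ (A ∩ tripleBlock k i).card := by
  simp [blockFamily]

lemma notmem_iff {k : ℕ} {A : Finset (Fin (3 * k))} (hA : A.card = k) :
    (∀ i : Fin k, A ∉ blockFamily k i) ↔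
      ∀ i : Fin k, (A ∩ tripleBlock k i).card = 1 := by
  constructor
  · intro h
    have hle : ∀ i : Fin k, (A ∩ tripleBlock k i).card ≤ 1 := by
      intro i
      by_contra hc
      exact h i (mem_blockFamily.mpr ⟨hA, by omega⟩)
    intro i
    by_contra hne
    have hi0 : (A ∩ tripleBlock k i).card = 0 := by have := hle i; omega
    have hsum := sum_card_inter k A
    have hlt : ∑ j : Fin k, (A ∩ tripleBlock k j).card <
        ∑ _j : Fin k, 1 := by
      refine Finset.sum_lt_sum (fun j _ => hle j) ⟨i, Finset.mem_univ i, by omega⟩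
    simp only [Finset.sum_const, Finset.card_univ, Fintype.card_fin, smul_eq_mul,
      mul_one] at hlt
    omega
  · intro h i hmem
    have := (mem_blockFamily.mp hmem).2
    have := h i
    omega

def transversal (k : ℕ) (f : Fin k → Fin 3) : Finset (Fin (3 * k)) :=
  Finset.image (fun i => emb k i (f i)) Finset.univ

lemma transversal_inter (k : ℕ) (f : Fin k → Fin 3) (i : Fin k) :
    transversal k f ∩ tripleBlock k i = {emb k i (f i)} := by
  ext x
  simp only [transversal, Finset.mem_inter, Finset.mem_image, Finset.mem_univ, true_and,
    mem_tripleBlock, Finset.mem_singleton]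
  constructor
  · rintro ⟨⟨i', rfl⟩, hdiv⟩
    have : i' = i := Fin.ext (by rw [← hdiv, emb_div])
    subst this; rfl
  · rintro rfl
    exact ⟨⟨i, rfl⟩, emb_div k i (f i)⟩

lemma transversal_inter_card (k : ℕ) (f : Fin k → Fin 3) (i : Fin k) :
    (transversal k f ∩ tripleBlock k i).card = 1 := by
  rw [transversal_inter]; simp

lemma transversal_card (k : ℕ) (f : Fin k → Fin 3) : (transversal k f).card = k := by
  rw [← sum_card_inter]
  simp [transversal_inter_card]

lemma transversal_injective (k : ℕ) : Function.Injective (transversal k) := by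
  intro f g h
  funext i
  have hmem : emb k i (f i) ∈ transversal k g := by
    rw [← h]
    exact Finset.mem_image.mpr ⟨i, Finset.mem_univ i, rfl⟩
  obtain ⟨i', -, hi'⟩ := Finset.mem_image.mp hmem
  obtain ⟨hii, hjj⟩ := emb_inj hi'
  subst hii
  exact hjj.symm

lemma filter_eq_image (k : ℕ) :
    (Finset.univ.filter fun A : Finset (Fin (3 * k)) =>
        A.card = k ∧ ∀ i : Fin k, A ∉ blockFamily k i) =
      Finset.image (transversal k) Finset.univ := by
  ext A
  simp only [Finset.mem_filter, Finset.mem_univ, true_and, Finset.mem_image]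
  constructor
  · rintro ⟨hA, hno⟩
    have h1 : ∀ i : Fin k, (A ∩ tripleBlock k i).card = 1 := (notmem_iff hA).mp hno
    have hex : ∀ i : Fin k, ∃ a, A ∩ tripleBlock k i = {a} :=
      fun i => Finset.card_eq_one.mp (h1 i)
    choose a ha using hex
    have hmem : ∀ i, a i ∈ A ∩ tripleBlock k i := fun i => by rw [ha i]; simp
    have hdiv : ∀ i : Fin k, (a i).1 / 3 = i.1 := fun i =>
      mem_tripleBlock.mp (Finset.mem_inter.mp (hmem i)).2
    refine ⟨fun i => ⟨(a i).1 % 3, by omega⟩, ?_⟩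
    have hemb : ∀ i : Fin k, emb k i ⟨(a i).1 % 3, by omega⟩ = a i := by
      intro i
      apply Fin.ext
      rw [emb_val]
      have := hdiv i
      simp only []
      omega
    have hsub : transversal k (fun i => ⟨(a i).1 % 3, by omega⟩) ⊆ A := by
      intro x hx
      obtain ⟨i, -, rfl⟩ := Finset.mem_image.mp hx
      rw [hemb i]
      exact (Finset.mem_inter.mp (hmem i)).1
    refine Finset.eq_of_subset_of_card_le hsub ?_
    rw [hA, transversal_card]
  · rintro ⟨f, rfl⟩
    have hc := transversal_card k f
    exact ⟨hc, (notmem_iff hc).mpr (transversal_inter_card k f)⟩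

end BlocksAux

/-- For `n = 3k`: (1) each `F_i` is intersecting; (2) a `k`-subset `A` of `[n]` lies in
no `F_i` iff `|A ∩ B_i| = 1` for all `i`; (3) exactly `3^k` of the `k`-subsets of `[n]`
lie in no `F_i`. In particular, all but exactly `3^k` of the `k`-subsets of `[3k]` are
covered by the `k = n − 2k` intersecting families `F_1, …, F_k`. -/
theorem blocks_coloring (k : ℕ) (hk : 1 ≤ k) :
    (∀ i : Fin k, ∀ A ∈ blockFamily k i, ∀ B ∈ blockFamily k i, (A ∩ B).Nonempty) ∧
    (∀ A : Finset (Fin (3 * k)), A.card = k →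
      ((∀ i : Fin k, A ∉ blockFamily k i) ↔
        ∀ i : Fin k, (A ∩ tripleBlock k i).card = 1)) ∧
    (Finset.univ.filter fun A : Finset (Fin (3 * k)) =>
        A.card = k ∧ ∀ i : Fin k, A ∉ blockFamily k i).card = 3 ^ k := by
  refine ⟨?_, fun A hA => BlocksAux.notmem_iff hA, ?_⟩
  · intro i A hA B hB
    obtain ⟨-, hA2⟩ := BlocksAux.mem_blockFamily.mp hA
    obtain ⟨-, hB2⟩ := BlocksAux.mem_blockFamily.mp hB
    have h3 := BlocksAux.card_tripleBlock k i
    have hsub : (A ∩ tripleBlock k i) ∪ (B ∩ tripleBlock k i) ⊆ tripleBlock k i := by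
      intro x hx
      rcases Finset.mem_union.mp hx with h | h
      · exact (Finset.mem_inter.mp h).2
      · exact (Finset.mem_inter.mp h).2
    have hu : ((A ∩ tripleBlock k i) ∪ (B ∩ tripleBlock k i)).card ≤ 3 :=
      (Finset.card_le_card hsub).trans h3.le
    have hi := Finset.card_inter_add_card_union (A ∩ tripleBlock k i)
      (B ∩ tripleBlock k i)
    have hpos : 0 < ((A ∩ tripleBlock k i) ∩ (B ∩ tripleBlock k i)).card := by omega
    refine (Finset.card_pos.mp hpos).mono ?_
    intro x hx
    obtain ⟨hx1, hx2⟩ := Finset.mem_inter.mp hx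
    exact Finset.mem_inter.mpr
      ⟨(Finset.mem_inter.mp hx1).1, (Finset.mem_inter.mp hx2).1⟩
  · rw [BlocksAux.filter_eq_image,
      Finset.card_image_of_injective _ (BlocksAux.transversal_injective k)]
    simp
end
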